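/- arXiv:math/9812115 — 3 statements merged into one kernel-verified Lean document; each statement's English description precedes it below -/
import Mathlib

section
/- Let T be an Aronszajn tree and n ≥ 1. If X ⊆ ⁿT is uncountable and downward closed, then there exist β < ω₁ and an uncountable Y ⊆ X such that, writing Y_γ = Y ∩ ⁿT_γ: (1) for all β ≤ γ₀ < γ₁ < ω₁, Y_{γ₀} = {x̄↾γ₀ : x̄ ∈ Y_{γ₁}}; and (2) Y_γ is dispersed for every γ with β ≤ γ < ω₁. -/
noncomputable section

open Cardinal Set

/-- The first uncountable ordinal. -/
def omega1 : Ordinal.{0} := (Cardinal.aleph 1).ord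

universe u v w

/-- A carrier together with a strict order relation and a level function. -/
structure PreTree (α : Type u) where
  lt : α → α → Prop
  lev : α → Ordinal.{u_1}

namespace PreTree

variable {α : Type u}

/-- reflexive closure of the tree order -/
def le (T : PreTree α) (x y : α) : Prop := x = y ∨ T.lt x y

/-- tree axioms: the relation is transitive, the level function is strictly increasing,
the predecessors of any node are linearly ordered and there is exactly one predecessor
at each smaller level (so the predecessors are well-ordered of order type `lev x`). -/
def IsTree (T : PreTree α) : Prop :=
  (∀ x y z, T.lt x y → T.lt y z → T.lt x z) ∧
  (∀ x y, T.lt x y → T.lev x < T.lev y) ∧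
  (∀ x y z, T.lt y x → T.lt z x → y = z ∨ T.lt y z ∨ T.lt z y) ∧
  (∀ x o, o < T.lev x → ∃! y, T.lt y x ∧ T.lev y = o)

/-- an ω₁-tree: height ω₁, countable nonempty levels, each node has ℵ₀ many
immediate successors and extensions in every higher level below ω₁. -/
def IsOmega1Tree (T : PreTree α) : Prop :=
  T.IsTree ∧
  (∀ x, T.lev x < omega1) ∧
  (∀ o, o < omega1 → {x | T.lev x = o}.Countable) ∧
  (∀ o, o < omega1 → ∃ x, T.lev x = o) ∧
  (∀ x, {y | T.lt x y ∧ T.lev y = T.lev x + 1}.Infinite) ∧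
  (∀ x o, T.lev x < o → o < omega1 → ∃ y, T.lt x y ∧ T.lev y = o)

def IsAntichain' (T : PreTree α) (s : Set α) : Prop :=
  ∀ x ∈ s, ∀ y ∈ s, x ≠ y → ¬ T.lt x y ∧ ¬ T.lt y x

def IsChain' (T : PreTree α) (s : Set α) : Prop :=
  ∀ x ∈ s, ∀ y ∈ s, x = y ∨ T.lt x y ∨ T.lt y x

/-- a Suslin tree: an ω₁-tree with no uncountable antichain -/
def Suslin (T : PreTree α) : Prop :=
  T.IsOmega1Tree ∧ ∀ s : Set α, T.IsAntichain' s → s.Countable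

/-- an Aronszajn tree: an ω₁-tree with no uncountable chain -/
def Aronszajn (T : PreTree α) : Prop :=
  T.IsOmega1Tree ∧ ∀ s : Set α, T.IsChain' s → s.Countable

/-- a special tree: there is an order preserving map into ℚ -/
def Special (T : PreTree α) : Prop :=
  ∃ f : α → ℚ, ∀ x y, T.lt x y → f x < f y

end PreTree

/-- the carrier of the product of a family of trees: tuples of nodes of a common level -/
abbrev ProdCarrier {ι : Type u} {β : ι → Type v} (A : ∀ i, PreTree (β i)) : Type (max u v) :=
  {f : ∀ i, β i // ∃ o, ∀ i, (A i).lev (f i) = o}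

/-- the product of a family of trees, ordered coordinatewise -/
def prodTree {ι : Type u} {β : ι → Type v} (A : ∀ i, PreTree (β i)) :
    PreTree (ProdCarrier A) where
  lt f g := ∀ i, (A i).lt (f.1 i) (g.1 i)
  lev f := ⨆ i, (A i).lev (f.1 i)

/-- the carrier of the product of two trees -/
abbrev ProdCarrier₂ {α : Type u} {β : Type v} (A : PreTree α) (B : PreTree β) : Type (max u v) :=
  {p : α × β // A.lev p.1 = B.lev p.2}

/-- the product of two trees -/
def prodTree₂ {α : Type u} {β : Type v} (A : PreTree α) (B : PreTree β) :
    PreTree (ProdCarrier₂ A B) where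
  lt p q := A.lt p.1.1 q.1.1 ∧ B.lt p.1.2 q.1.2
  lev p := A.lev p.1.1

abbrev ConeCarrier {α : Type u} (T : PreTree α) (a : α) : Type u := {x : α // x = a ∨ T.lt a x}

/-- the subtree `T_a` of all extensions of `a`, with levels shifted to start at `0` -/
def cone {α : Type u} (T : PreTree α) (a : α) : PreTree (ConeCarrier T a) where
  lt x y := T.lt x.1 y.1
  lev x := T.lev x.1 - T.lev a

/-- the derived tree determined by a tuple of (distinct, same-level) nodes:
the product of the cones above the nodes -/
def derivedTree {α : Type u} (T : PreTree α) {n : ℕ} (a : Fin (n+1) → α) :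
    PreTree (ProdCarrier (fun i => cone T (a i))) :=
  prodTree (fun i => cone T (a i))

/-- every derived tree of `T` is a Suslin tree -/
def AllDerivedSuslin {α : Type u} (T : PreTree α) : Prop :=
  ∀ (n : ℕ) (a : Fin (n+1) → α), Function.Injective a →
    (∀ i, T.lev (a i) = T.lev (a 0)) → (derivedTree T a).Suslin

/-- carrier of the disjoint union of the trees with indices in the finite set `d` -/
abbrev UnionCarrier {I : Type u} (β : I → Type v) (d : Finset I) : Type (max u v) :=
  {p : Sigma β // p.1 ∈ d}

/-- the disjoint union of the trees with indices in `d` -/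
def unionTree {I : Type u} {β : I → Type v} (A : ∀ ζ, PreTree (β ζ)) (d : Finset I) :
    PreTree (UnionCarrier β d) where
  lt x y := ∃ h : x.1.1 = y.1.1, (A y.1.1).lt (cast (congrArg β h) x.1.2) y.1.2
  lev x := (A x.1.1).lev x.1.2

/-! clubs, stationary sets and the diamond principle on ω₁ -/

/-- `C` is a closed unbounded subset of ω₁ -/
def IsClubO1 (C : Set Ordinal) : Prop :=
  (∀ c ∈ C, c < omega1) ∧
  (∀ o, o < omega1 → ∃ c ∈ C, o ≤ c) ∧
  (∀ o, o < omega1 → o ≠ 0 → (∀ b, o ≠ b + 1) →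
    (∀ b, b < o → ∃ c ∈ C, b ≤ c ∧ c < o) → o ∈ C)

/-- `S` is stationary in ω₁ -/
def StationaryO1 (S : Set Ordinal) : Prop :=
  ∀ C, IsClubO1 C → (S ∩ C).Nonempty

/-- the diamond principle ◇ on ω₁ -/
def DiamondO1 : Prop :=
  ∃ S : Ordinal → Set Ordinal,
    (∀ ξ, S ξ ⊆ Set.Iio ξ) ∧
    ∀ X : Set Ordinal, X ⊆ Set.Iio omega1 →
      StationaryO1 {ξ | ξ < omega1 ∧ X ∩ Set.Iio ξ = S ξ}

/-! ω₁-like orders, parity, patterns -/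

/-- `j` is the immediate successor of `i` -/
def ISucc {I : Type u} [LinearOrder I] (i j : I) : Prop :=
  i < j ∧ ∀ k, i < k → j ≤ k

/-- `j` is the `n`-th iterated immediate successor of `i` -/
def IterSucc {I : Type u} [LinearOrder I] : ℕ → I → I → Prop
  | 0, i, j => i = j
  | n+1, i, j => ∃ k, IterSucc n i k ∧ ISucc k j

/-- `i` is a limit point: not an immediate successor (least elements count as limits) -/
def ILimit {I : Type u} [LinearOrder I] (i : I) : Prop := ¬ ∃ j, ISucc j i

/-- `i` is even: of the form `δ + n` with `δ` a limit and `n` even -/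
def IEven {I : Type u} [LinearOrder I] (i : I) : Prop :=
  ∃ (δ : I) (n : ℕ), ILimit δ ∧ Even n ∧ IterSucc n δ i

/-- `i` is odd: of the form `δ + n` with `δ` a limit and `n` odd -/
def IOdd {I : Type u} [LinearOrder I] (i : I) : Prop :=
  ∃ (δ : I) (n : ℕ), ILimit δ ∧ Odd n ∧ IterSucc n δ i

/-- an ω₁-like order: uncountable, proper initial segments countable,
with a least element, and every element has an immediate successor -/
def IsOmega1Like (I : Type u) [LinearOrder I] : Prop :=
  ¬ (Set.univ : Set I).Countable ∧
  (∀ i : I, {j | j < i}.Countable) ∧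
  (∃ b : I, ∀ i, b ≤ i) ∧
  (∀ i : I, ∃ j, ISucc i j)

/-- the initial segment below `δ` is well-ordered, of order type `ot` -/
def SegType {I : Type u} [LinearOrder I] (δ : I) (ot : Ordinal.{0}) : Prop :=
  ∃ h : IsWellOrder {j : I // j < δ} (fun a b => a < b),
    @Ordinal.type {j : I // j < δ} (fun a b => a < b) h = Ordinal.lift.{u, 0} ot

open Classical in
/-- the finite set `{a, b, c, d}` -/
def quadF {I : Type u} (a b c d : I) : Finset I := {a, b, c, d}

/-- a pattern over `I`: `sp` consists of nonempty finite subsets of `I` closed under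
supersets, and `su` is its complement among the nonempty finite subsets -/
def IsPatternI {I : Type u} (su sp : Set (Finset I)) : Prop :=
  (∀ e ∈ sp, e.Nonempty) ∧
  (∀ e ∈ sp, ∀ e' : Finset I, e ⊆ e' → e' ∈ sp) ∧
  su = {e | e.Nonempty ∧ e ∉ sp}

/-- `E` assigns to each countable limit ordinal `δ ≠ 0` a canonical code `E δ ⊆ ω`
of a well-order of ω of order type `δ` -/
def GoodCodes (E : Ordinal → Set ℕ) : Prop :=
  E 0 = ∅ ∧
  ∀ δ : Ordinal, δ < omega1 → δ ≠ 0 → (∀ b, δ ≠ b + 1) →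
    ∃ (r : ℕ → ℕ → Prop) (h : IsWellOrder ℕ r),
      @Ordinal.type ℕ r h = δ ∧ E δ = {m | ∃ a b, r a b ∧ m = Nat.pair a b}

/-- a simple pattern: the pattern respects the "simplicity table" -/
def IsSimplePatternI {I : Type u} [LinearOrder I] (E : Ordinal → Set ℕ)
    (su sp : Set (Finset I)) : Prop :=
  IsPatternI su sp ∧
  -- Suslin column: all triples, pairs and singletons
  (∀ e : Finset I, e.Nonempty → e.card ≤ 3 → e ∈ su) ∧
  -- Suslin column: quadruples
  (∀ ζ₁ ζ₂ ζ₃ ζ₄ : I, ζ₁ < ζ₂ → ζ₂ < ζ₃ → ζ₃ < ζ₄ →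
    ((IEven ζ₁ ∧ IEven ζ₂ ∧ IEven ζ₃ ∧ IEven ζ₄) ∨
     (IOdd ζ₁ ∧ IOdd ζ₂ ∧ IOdd ζ₃ ∧ IOdd ζ₄) ∨
     (IOdd ζ₁ ∧ IEven ζ₂ ∧ IOdd ζ₃ ∧ IEven ζ₄) ∨
     (IOdd ζ₁ ∧ IEven ζ₂ ∧ IEven ζ₃ ∧ IOdd ζ₄) ∨
     (ILimit ζ₁ ∧ IEven ζ₂ ∧ IOdd ζ₃ ∧ IOdd ζ₄) ∨
     (ISucc ζ₁ ζ₂ ∧ IOdd ζ₃ ∧ IOdd ζ₄)) →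
    quadF ζ₁ ζ₂ ζ₃ ζ₄ ∈ su) ∧
  (∀ (δ : I) (ot : Ordinal) (i : ℕ) (x1 x3 x4 xi : I),
    ILimit δ → SegType δ ot →
    IterSucc 1 δ x1 → IterSucc 3 δ x3 → IterSucc 4 δ x4 → IterSucc (5+i) δ xi →
    i ∈ E ot → quadF x1 x3 x4 xi ∈ su) ∧
  -- special column: all quintuples (and larger sets)
  (∀ e : Finset I, 5 ≤ e.card → e ∈ sp) ∧
  -- special column: quadruples
  (∀ ζ₁ ζ₂ ζ₃ ζ₄ : I, ζ₁ < ζ₂ → ζ₂ < ζ₃ → ζ₃ < ζ₄ →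
    ((IEven ζ₁ ∧ IOdd ζ₂ ∧ IEven ζ₃ ∧ IOdd ζ₄) ∨
     (IOdd ζ₁ ∧ IEven ζ₂ ∧ IEven ζ₃ ∧ IEven ζ₄) ∨
     (IEven ζ₁ ∧ ¬ ILimit ζ₁ ∧ IEven ζ₂ ∧ IOdd ζ₃ ∧ IOdd ζ₄) ∨
     (((IEven ζ₁ ∧ IOdd ζ₂) ∨ (IOdd ζ₁ ∧ IEven ζ₂)) ∧ ¬ ISucc ζ₁ ζ₂ ∧ IOdd ζ₃ ∧ IOdd ζ₄)) →
    quadF ζ₁ ζ₂ ζ₃ ζ₄ ∈ sp) ∧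
  (∀ (δ : I) (ot : Ordinal) (i : ℕ) (x1 x3 x4 xi : I),
    ILimit δ → SegType δ ot →
    IterSucc 1 δ x1 → IterSucc 3 δ x3 → IterSucc 4 δ x4 → IterSucc (5+i) δ xi →
    i ∉ E ot → quadF x1 x3 x4 xi ∈ sp)

/-- the ordinals below ω₁, as a linear order -/
abbrev O1 : Type 1 := {o : Ordinal // o < omega1}

theorem nat_lt_omega1 (n : ℕ) : (n : Ordinal) < omega1 := by
  have h1 : (n : Ordinal) < Ordinal.omega0 := Ordinal.nat_lt_omega0 n
  have h2 : Ordinal.omega0 ≤ omega1 := by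
    rw [← Cardinal.ord_aleph0]
    exact Cardinal.ord_le_ord.mpr (Cardinal.aleph0_le_aleph 1)
  exact h1.trans_le h2

/-- the natural number `n` as an element of `O1` -/
def o1 (n : ℕ) : O1 := ⟨(n : Ordinal), nat_lt_omega1 n⟩

/-- the sequence of trees realizes the pattern `(su, sp)`: for `d ∈ su` the disjoint
union `T^d` and all of its derived trees are Suslin, and for `d ∈ sp` the full
product `T^(d)` is special -/
def HasPattern {I : Type u} {β : I → Type v} (A : ∀ ζ, PreTree (β ζ))
    (su sp : Set (Finset I)) : Prop :=
  (∀ d ∈ su, (unionTree A d).Suslin ∧ AllDerivedSuslin (unionTree A d)) ∧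
  (∀ d ∈ sp, (prodTree (fun ζ : {x // x ∈ d} => A ζ.1)).Special)

/-- a club-embedding of `A` into `B`: a level-preserving order-embedding defined on
the restriction of `A` to a club set of levels -/
def ClubEmbeds {α : Type u} {β : Type v} (A : PreTree α) (B : PreTree β) : Prop :=
  ∃ C : Set Ordinal, IsClubO1 C ∧
    ∃ h : {x : α // A.lev x ∈ C} → β,
      Function.Injective h ∧
      (∀ x, B.lev (h x) = A.lev x.1) ∧
      (∀ x y, A.lt x.1 y.1 ↔ B.lt (h x) (h y))

/-- the collection `{T^d : d ∈ su}` is primal: every derived tree of every member is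
Suslin, and every Suslin tree contains a club-embedded copy of a derived tree of a member -/
def Primal {I : Type u} {β : I → Type v} (A : ∀ ζ, PreTree (β ζ)) (su : Set (Finset I)) : Prop :=
  (∀ d ∈ su, (unionTree A d).Suslin ∧ AllDerivedSuslin (unionTree A d)) ∧
  ∀ (γ : Type w) (S : PreTree γ), S.Suslin →
    ∃ d ∈ su, ∃ (n : ℕ) (a : Fin (n+1) → UnionCarrier β d),
      Function.Injective a ∧
      (∀ i, (unionTree A d).lev (a i) = (unionTree A d).lev (a 0)) ∧
      ClubEmbeds (derivedTree (unionTree A d) a) S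

/-! the specializing poset S(T) -/

/-- domain of a partial function into ℚ -/
def pdom {α : Type u} (h : α → Option ℚ) : Set α := {x | h x ≠ none}

/-- the finite function `h` (living on level ≥ a) bounds the approximation `f`
(with `last f = a`): on each point of its domain it is strictly above the value of `f`
at the unique level-`a` restriction of the point -/
def Bounds {α : Type u} (T : PreTree α) (a : Ordinal) (f h : α → Option ℚ) : Prop :=
  ∀ x q, h x = some q → ∃ y r, T.le y x ∧ T.lev y = a ∧ f y = some r ∧ r < q

/-- a requirement of height `γ` and arity `n` -/
def IsRequirement {α : Type u} (T : PreTree α) (γ : Ordinal) (n : ℕ)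
    (H : Set (α → Option ℚ)) : Prop :=
  ∀ h ∈ H, (pdom h).Finite ∧ (pdom h).ncard = n ∧ ∀ x ∈ pdom h, T.lev x = γ

/-- the requirement `H` of height `γ` is dispersed -/
def DispersedReq {α : Type u} (T : PreTree α) (γ : Ordinal) (H : Set (α → Option ℚ)) : Prop :=
  ∀ t : Set α, t.Finite → t ⊆ {x | T.lev x = γ} → ∃ h ∈ H, ∀ x ∈ t, h x = none

/-- `h'` is the restriction `h↾γ` of the finite function `h` to level `γ`:
`h'(x↾γ) = h(x)` -/
def IsRestrictTo {α : Type u} (T : PreTree α) (γ : Ordinal) (h h' : α → Option ℚ) : Prop :=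
  (∀ y, h' y ≠ none ↔ (T.lev y = γ ∧ ∃ x, T.le y x ∧ h x ≠ none)) ∧
  (∀ y x, T.lev y = γ → T.le y x → h x ≠ none → h' y = h x)

/-- the approximation `f` (with `last f = a`) fulfills the requirement `H` of height `a` -/
def FulfillsReq {α : Type u} (T : PreTree α) (a : Ordinal) (f : α → Option ℚ)
    (H : Set (α → Option ℚ)) : Prop :=
  ∀ t : Set α, t.Finite → t ⊆ {x | T.lev x = a} →
    ∃ h ∈ H, Bounds T a f h ∧ ∀ x ∈ t, h x = none

/-- an approximation: a partial specializing function defined exactly on the nodes of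
level ≤ a -/
def IsApprox {α : Type u} (T : PreTree α) (a : Ordinal) (f : α → Option ℚ) : Prop :=
  a < omega1 ∧
  (∀ x, f x ≠ none ↔ T.lev x ≤ a) ∧
  (∀ x y qx qy, T.lt x y → f x = some qx → f y = some qy → qx < qy)

/-- a promise with base `b`: countable nonempty coherent sets of dispersed requirements,
one for each level `γ` with `b ≤ γ < ω₁`, all of one fixed arity -/
def IsPromise {α : Type u} (T : PreTree α) (b : Ordinal)
    (Γ : Ordinal → Set (Set (α → Option ℚ))) : Prop :=
  b < omega1 ∧
  (∃ n : ℕ, ∀ γ, b ≤ γ → γ < omega1 → ∀ H ∈ Γ γ, IsRequirement T γ n H) ∧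
  (∀ γ, b ≤ γ → γ < omega1 →
    (Γ γ).Countable ∧ (Γ γ).Nonempty ∧ ∀ H ∈ Γ γ, DispersedReq T γ H) ∧
  (∀ γ₀ γ₁, b ≤ γ₀ → γ₀ < γ₁ → γ₁ < omega1 →
    Γ γ₀ = {H' | ∃ H ∈ Γ γ₁, H' = {h' | ∃ h ∈ H, IsRestrictTo T γ₀ h h'}})

/-- a condition of the specializing poset `S(T)`: an approximation together with a
promise which it fulfills -/
structure SCond {α : Type u} (T : PreTree α) where
  last : Ordinal
  f : α → Option ℚ
  base : Ordinal
  Γ : Ordinal → Set (Set (α → Option ℚ))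
  approx : IsApprox T last f
  promise : IsPromise T base Γ
  base_le : base ≤ last
  fulfills : ∀ H ∈ Γ last, FulfillsReq T last f H

/-- `q` extends `p` in `S(T)` -/
def SExtends {α : Type u} {T : PreTree α} (q p : SCond T) : Prop :=
  p.last ≤ q.last ∧
  (∀ x, p.f x ≠ none → q.f x = p.f x) ∧
  ∀ γ, q.last ≤ γ → γ < omega1 → p.Γ γ ⊆ q.Γ γ

/-! the naive specializing poset S₂(T) -/

/-- a condition of the poset `S₂(T)` -/
def IsS2Cond {α : Type u} (T : PreTree α) (a : Ordinal) (f : α → Option ℚ) : Prop :=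
  IsApprox T a f ∧
  ∀ a₀, a₀ < a → ∀ (n : ℕ) (x : Fin (n+1) → α) (q : Fin (n+1) → ℚ),
    (∀ i, T.lev (x i) = a₀) →
    (∀ i, ∃ r, f (x i) = some r ∧ r < q i) →
    ∃ y : Fin (n+1) → α, ∀ i, T.lt (x i) (y i) ∧ T.lev (y i) = a ∧ f (y i) = some (q i)

/-- the disjoint union of two trees -/
def sumTree {α : Type u} {β : Type v} (A : PreTree α) (B : PreTree β) : PreTree (α ⊕ β) where
  lt x y :=
    match x, y with
    | Sum.inl a, Sum.inl b => A.lt a b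
    | Sum.inr a, Sum.inr b => B.lt a b
    | _, _ => False
  lev := Sum.elim A.lev B.lev


/-!
Let `Y` be the set of persistent tuples of `X`, those with extensions in `X` at every higher
countable level. Since a level of `ⁿT` is countable, the tuples of such a level cannot all die
out below `ω₁`; hence `Y` meets every level and is closed under restriction and extension.

If `Y_γ` is not dispersed, a finite `t ⊆ T_γ` meets every tuple of `Y_γ`, and its projection
to any lower level does the same, so it suffices to rule out blocking sets at every level.
The minimum size of a blocking set is then nondecreasing in the level, hence eventually
constant; from there on minimum blocking sets project to minimum blocking sets and each level
has only finitely many of them. Their elements thus form a subtree with finite nonempty levels,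
and Kőnig's lemma gives it a cofinal branch: an uncountable chain in `T`.
-/

theorem omega1_eq : omega1 = Ordinal.omega 1 := by
  rw [omega1]; exact_mod_cast Cardinal.ord_aleph 1

theorem add_one_lt_omega1 {o : Ordinal} (h : o < omega1) : o + 1 < omega1 := by
  rw [omega1_eq] at *
  exact (isSuccLimit_omega 1).succ_lt h

theorem countable_Iio_of_lt_omega1 {o : Ordinal} (h : o < omega1) : (Iio o).Countable := by
  rw [omega1_eq, lt_omega_iff_card_lt, lt_aleph_one_iff] at h
  rw [← Set.countable_coe_iff, ← mk_le_aleph0_iff, mk_Iio_ordinal, lift_le_aleph0]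
  exact h

theorem exists_upper_bound_of_countable {S : Set Ordinal} (hS : S.Countable)
    (h : ∀ o ∈ S, o < omega1) : ∃ b < omega1, ∀ o ∈ S, o ≤ b := by
  have := hS.to_subtype
  refine ⟨⨆ o : S, o.1, ?_, fun o ho => Ordinal.le_iSup (fun o : S => o.1) ⟨o, ho⟩⟩
  rw [omega1_eq] at h ⊢
  exact Ordinal.iSup_lt_omega_one fun o => h o o.2

theorem not_countable_of_unbounded {β : Type*} {S : Set β} (f : β → Ordinal)
    (hf : ∀ x ∈ S, f x < omega1) (h : ∀ b < omega1, ∃ x ∈ S, b ≤ f x) : ¬ S.Countable := by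
  intro hS
  obtain ⟨b, hb, hbound⟩ := exists_upper_bound_of_countable (hS.image f) (by simpa using hf)
  obtain ⟨x, hx, hbx⟩ := h (b + 1) (add_one_lt_omega1 hb)
  exact (Order.lt_add_one_iff.mpr (hbound _ (mem_image_of_mem f hx))).not_ge hbx

theorem exists_forall_ge_eq_of_monotoneOn {f : Ordinal → ℕ} (hf : MonotoneOn f (Iio omega1)) :
    ∃ β < omega1, ∀ γ, β ≤ γ → γ < omega1 → f γ = f β := by
  obtain ⟨β, hβ, hle⟩ := exists_upper_bound_of_countable
    (countable_range fun v : f '' Iio omega1 => v.2.choose)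
    (by rintro _ ⟨v, rfl⟩; exact v.2.choose_spec.1)
  refine ⟨β, hβ, fun γ hγ hγω => le_antisymm ?_ (hf hβ hγω hγ)⟩
  have hv : f γ ∈ f '' Iio omega1 := ⟨γ, hγω, rfl⟩
  calc f γ = f hv.choose := hv.choose_spec.2.symm
    _ ≤ f β := hf hv.choose_spec.1 hβ (hle _ ⟨⟨_, hv⟩, rfl⟩)

open CategoryTheory in
theorem exists_coherent_thread {J : Type*} [Preorder J] [IsDirectedOrder J] (F : J → Type*)
    [∀ j, Finite (F j)] [∀ j, Nonempty (F j)] (f : ∀ ⦃i j : J⦄, i ≤ j → F j → F i)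
    (f_refl : ∀ i (x : F i), f le_rfl x = x)
    (f_trans : ∀ ⦃i j k : J⦄ (hij : i ≤ j) (hjk : j ≤ k) (x : F k),
      f hij (f hjk x) = f (hij.trans hjk) x) :
    ∃ u : ∀ j, F j, ∀ ⦃i j⦄ (h : i ≤ j), f h (u j) = u i := by
  let G : Jᵒᵖ ⥤ Type _ :=
    { obj := fun j => F j.unop
      map := fun h => TypeCat.ofHom (f h.unop.le)
      map_id := fun j => by ext x; exact f_refl _ x
      map_comp := fun g h => by ext x; exact (f_trans _ _ x).symm }
  have : ∀ j : Jᵒᵖ, Finite (G.obj j) := fun j => inferInstanceAs (Finite (F j.unop))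
  have : ∀ j : Jᵒᵖ, Nonempty (G.obj j) := fun j => inferInstanceAs (Nonempty (F j.unop))
  obtain ⟨u, hu⟩ := nonempty_sections_of_finite_inverse_system G
  exact ⟨fun j => u (Opposite.op j), fun i j h => hu (homOfLE h).op⟩

theorem finite_setOf_meets_card_eq {ι β : Type*} [Finite ι] (Z : Set (ι → β)) (k : ℕ)
    (hk : ∀ t : Finset β, (∀ x ∈ Z, ∃ i, x i ∈ t) → k ≤ t.card) :
    {t : Finset β | (∀ x ∈ Z, ∃ i, x i ∈ t) ∧ t.card = k}.Finite := by
  classical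
  induction k generalizing Z with
  | zero => exact (finite_singleton ∅).subset fun t ht => Finset.card_eq_zero.mp ht.2
  | succ k ih =>
    obtain ⟨x₀, hx₀⟩ : Z.Nonempty := nonempty_iff_ne_empty.mpr fun hZ => by
      simpa using hk ∅ (by simp [hZ])
    -- A set of size `k + 1` meeting `Z` contains some `x₀ i`, and the rest meets the tuples
    -- of `Z` avoiding `x₀ i`.
    let Z' (i : ι) : Set (ι → β) := {x ∈ Z | ∀ j, x j ≠ x₀ i}
    refine (finite_iUnion fun i => (ih (Z' i) fun u hu => ?_).image (insert (x₀ i))).subset ?_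
    · have hmeet : ∀ x ∈ Z, ∃ j, x j ∈ insert (x₀ i) u := fun x hx => by
        by_cases h : ∀ j, x j ≠ x₀ i
        · obtain ⟨j, hj⟩ := hu x ⟨hx, h⟩
          exact ⟨j, Finset.mem_insert_of_mem hj⟩
        · push Not at h
          obtain ⟨j, hj⟩ := h
          exact ⟨j, hj ▸ Finset.mem_insert_self _ _⟩
      have := (hk _ hmeet).trans (Finset.card_insert_le _ _)
      omega
    · rintro t ⟨hmeet, hcard⟩
      obtain ⟨i, hi⟩ := hmeet x₀ hx₀
      refine mem_iUnion.mpr ⟨i, t.erase (x₀ i), ⟨fun x hx => ?_, ?_⟩, Finset.insert_erase hi⟩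
      · obtain ⟨j, hj⟩ := hmeet x hx.1
        exact ⟨j, Finset.mem_erase.mpr ⟨hx.2 j, hj⟩⟩
      · rw [Finset.card_erase_of_mem hi, hcard, Nat.add_sub_cancel]

namespace PreTree

open Classical in
/-- `x↾o`; junk value `x` when `x` has no predecessor of level `o`. -/
def res {α : Type*} (T : PreTree α) (o : Ordinal) (x : α) : α :=
  if h : ∃ y, T.lt y x ∧ T.lev y = o then h.choose else x

namespace IsTree

variable {α : Type*} {T : PreTree α} {o o' : Ordinal} {x y z : α}

theorem le_trans (hT : T.IsTree) (hxy : T.le x y) (hyz : T.le y z) : T.le x z := by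
  rcases hxy with rfl | hxy
  · exact hyz
  rcases hyz with rfl | hyz
  · exact Or.inr hxy
  · exact Or.inr (hT.1 _ _ _ hxy hyz)

theorem res_spec (hT : T.IsTree) (h : o < T.lev x) :
    T.lt (T.res o x) x ∧ T.lev (T.res o x) = o := by
  have hex : ∃ y, T.lt y x ∧ T.lev y = o := (hT.2.2.2 x o h).exists
  rw [res, dif_pos hex]
  exact hex.choose_spec

theorem res_self (hT : T.IsTree) (x : α) : T.res (T.lev x) x = x :=
  dif_neg fun ⟨_, hyx, hy⟩ => (hT.2.1 _ _ hyx).ne hy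

theorem lev_res (hT : T.IsTree) (h : o ≤ T.lev x) : T.lev (T.res o x) = o := by
  rcases h.lt_or_eq with h | rfl
  · exact (hT.res_spec h).2
  · rw [hT.res_self]

theorem res_le (hT : T.IsTree) (h : o ≤ T.lev x) : T.le (T.res o x) x := by
  rcases h.lt_or_eq with h | rfl
  · exact Or.inr (hT.res_spec h).1
  · exact Or.inl (hT.res_self x)

theorem res_eq_of_le (hT : T.IsTree) (h : T.le y x) (hy : T.lev y = o) : T.res o x = y := by
  rcases h with rfl | h
  · subst hy; exact hT.res_self y
  · have ho : o < T.lev x := hy ▸ hT.2.1 _ _ h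
    exact (hT.2.2.2 x o ho).unique (hT.res_spec ho) ⟨h, hy⟩

theorem res_res (hT : T.IsTree) (h : o ≤ o') (h' : o' ≤ T.lev x) :
    T.res o (T.res o' x) = T.res o x := by
  have h₀ : o ≤ T.lev (T.res o' x) := (hT.lev_res h').symm ▸ h
  exact (hT.res_eq_of_le (hT.le_trans (hT.res_le h₀) (hT.res_le h')) (hT.lev_res h₀)).symm

theorem res_le_res (hT : T.IsTree) (h : o ≤ o') (h' : o' ≤ T.lev x) :
    T.le (T.res o x) (T.res o' x) :=
  hT.res_res h h' ▸ hT.res_le ((hT.lev_res h').symm ▸ h)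

end IsTree

variable {α ι : Type*} {T : PreTree α} {X Y : Set (ι → α)}

theorem IsOmega1Tree.exists_uncountable_chain_of_finite_levels (hT : T.IsOmega1Tree) {U : Set α}
    {β : Ordinal} (hβ : β < omega1)
    (hfin : ∀ γ, β ≤ γ → γ < omega1 → {z ∈ U | T.lev z = γ}.Finite)
    (hne : ∀ γ, β ≤ γ → γ < omega1 → ∃ z ∈ U, T.lev z = γ)
    (hres : ∀ z ∈ U, ∀ γ, β ≤ γ → γ ≤ T.lev z → T.res γ z ∈ U) :
    ∃ s, T.IsChain' s ∧ ¬ s.Countable := by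
  let F (j : Ico β omega1) : Type _ := {z // z ∈ U ∧ T.lev z = j}
  have : ∀ j, Finite (F j) := fun j => (hfin j j.2.1 j.2.2).to_subtype
  have : ∀ j, Nonempty (F j) := fun j =>
    let ⟨z, hz⟩ := hne j j.2.1 j.2.2
    ⟨⟨z, hz⟩⟩
  have hle {i j} (h : i ≤ j) (z : F j) : (i : Ordinal) ≤ T.lev z.1 :=
    (Subtype.coe_le_coe.mpr h).trans z.2.2.ge
  obtain ⟨u, hu⟩ := exists_coherent_thread F
    (fun i _ h z => ⟨T.res i z.1, hres z.1 z.2.1 i i.2.1 (hle h z), hT.1.lev_res (hle h z)⟩)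
    (fun _ z => Subtype.ext (hT.1.res_eq_of_le (Or.inl rfl) z.2.2))
    (fun _ _ _ hij hjk z => Subtype.ext (hT.1.res_res hij (hle hjk z)))
  have hlt : ∀ ⦃i j⦄, i < j → T.lt (u i).1 (u j).1 := fun i j h => by
    rw [← hu h.le]
    exact (hT.1.res_spec ((Subtype.coe_lt_coe.mpr h).trans_le (u j).2.2.ge)).1
  refine ⟨range fun j => (u j).1, ?_, not_countable_of_unbounded T.lev
    (by rintro _ ⟨j, rfl⟩; exact hT.2.1 _) fun b hb => ?_⟩
  · rintro _ ⟨i, rfl⟩ _ ⟨j, rfl⟩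
    rcases lt_trichotomy i j with h | rfl | h
    · exact Or.inr (Or.inl (hlt h))
    · exact Or.inl rfl
    · exact Or.inr (Or.inr (hlt h))
  · exact ⟨_, ⟨⟨max β b, le_max_left _ _, max_lt hβ hb⟩, rfl⟩, (u _).2.2 ▸ le_max_right _ _⟩

/-- `ⁿT_γ`, for `ι = Fin n`. -/
def levelTuples (T : PreTree α) (γ : Ordinal) : Set (ι → α) :=
  {x | ∀ i, T.lev (x i) = γ}

def IsDownwardClosed (T : PreTree α) (X : Set (ι → α)) : Prop :=
  ∀ x ∈ X, ∀ y : ι → α, (∃ o, ∀ i, T.lev (y i) = o) → (∀ i, T.le (y i) (x i)) → y ∈ X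

def persistent (T : PreTree α) (X : Set (ι → α)) : Set (ι → α) :=
  {x ∈ X | ∀ γ < omega1, (∀ i, T.lev (x i) ≤ γ) →
    ∃ y ∈ X ∩ T.levelTuples γ, ∀ i, T.le (x i) (y i)}

def Extendable (T : PreTree α) (Y : Set (ι → α)) : Prop :=
  ∀ γ δ, γ ≤ δ → δ < omega1 → ∀ x ∈ Y ∩ T.levelTuples γ,
    ∃ y ∈ Y ∩ T.levelTuples δ, ∀ i, T.le (x i) (y i)

/-- Witnesses that `Y_γ` is not dispersed. -/
def Blocks (T : PreTree α) (Y : Set (ι → α)) (γ : Ordinal) (t : Finset α) : Prop :=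
  ∀ x ∈ Y ∩ T.levelTuples γ, ∃ i, x i ∈ t

theorem IsOmega1Tree.levelTuples_countable [Finite ι] (hT : T.IsOmega1Tree) {γ : Ordinal}
    (hγ : γ < omega1) : (T.levelTuples γ : Set (ι → α)).Countable :=
  countable_pi fun _ => hT.2.2.1 γ hγ

theorem IsDownwardClosed.res_comp_mem (hX : T.IsDownwardClosed X)
    (hT : T.IsTree) {γ δ : Ordinal} {x : ι → α} (hx : x ∈ X ∩ T.levelTuples δ) (h : γ ≤ δ) :
    T.res γ ∘ x ∈ X ∩ T.levelTuples γ := by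
  have hγx : ∀ i, γ ≤ T.lev (x i) := fun i => hx.2 i ▸ h
  have hlev : ∀ i, T.lev (T.res γ (x i)) = γ := fun i => hT.lev_res (hγx i)
  exact ⟨hX x hx.1 _ ⟨γ, hlev⟩ fun i => hT.res_le (hγx i), hlev⟩

theorem IsDownwardClosed.exists_mem_levelTuples [Finite ι] (hX : T.IsDownwardClosed X)
    (hT : T.IsOmega1Tree)
    (hXlev : ∀ x ∈ X, ∃ o, ∀ i, T.lev (x i) = o) (hXunc : ¬ X.Countable) {γ : Ordinal}
    (hγ : γ < omega1) : (X ∩ T.levelTuples γ).Nonempty := by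
  suffices ∃ δ, γ ≤ δ ∧ (X ∩ T.levelTuples δ).Nonempty by
    obtain ⟨δ, hγδ, x, hx⟩ := this
    exact ⟨_, hX.res_comp_mem hT.1 hx hγδ⟩
  by_contra! hlow
  refine hXunc (((countable_Iio_of_lt_omega1 hγ).biUnion fun δ hδ =>
    hT.levelTuples_countable (ι := ι) (hδ.trans hγ)).mono fun x hx => ?_)
  obtain ⟨δ, hδ⟩ := hXlev x hx
  exact mem_biUnion (not_le.mp fun hγδ => (hlow δ hγδ).subset ⟨hx, hδ⟩) hδ

theorem exists_mem_persistent [Finite ι] (hT : T.IsOmega1Tree) (hX : T.IsDownwardClosed X)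
    {E : Set (ι → α)} {γ : Ordinal} (hγ : γ < omega1) (hE : E ⊆ X ∩ T.levelTuples γ)
    (hcof : ∀ δ, γ ≤ δ → δ < omega1 → ∃ z ∈ X ∩ T.levelTuples δ, T.res γ ∘ z ∈ E) :
    ∃ y ∈ E, y ∈ T.persistent X := by
  -- Otherwise every tuple `y` of the countable set `E` dies out at some level `D y`; a tuple of
  -- `X` above all these levels restricts to a tuple of `E` that survives past its `D y`.
  by_contra! hnot
  have hdies : ∀ y : E, ∃ δ < omega1, (∀ i, T.lev (y.1 i) ≤ δ) ∧
      ∀ w ∈ X ∩ T.levelTuples δ, ∃ i, ¬ T.le (y.1 i) (w i) := by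
    rintro ⟨y, hy⟩
    have := hnot y hy
    rw [persistent, mem_sep_iff] at this
    push Not at this
    exact this (hE hy).1
  choose D hD hDlev hDno using hdies
  have := ((hT.levelTuples_countable hγ).mono (hE.trans inter_subset_right)).to_subtype
  obtain ⟨b, hb, hDb⟩ := exists_upper_bound_of_countable (countable_range D)
    (by rintro _ ⟨y, rfl⟩; exact hD y)
  obtain ⟨z, hz, hzE⟩ := hcof (max γ b) (le_max_left _ _) (max_lt hγ hb)
  set y : E := ⟨_, hzE⟩
  have hDz : D y ≤ max γ b := (hDb _ ⟨y, rfl⟩).trans (le_max_right _ _)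
  obtain ⟨i, hi⟩ := hDno y _ (hX.res_comp_mem hT.1 hz hDz)
  refine hi ?_
  have hγD : γ ≤ D y := (hT.1.lev_res (hz.2 i ▸ le_max_left γ b)).symm.trans_le (hDlev y i)
  exact hT.1.res_le_res hγD (hz.2 i ▸ hDz)

theorem res_comp_mem_persistent (hT : T.IsTree) (hX : T.IsDownwardClosed X) {x : ι → α}
    {γ δ : Ordinal} (hx : x ∈ T.persistent X) (hxδ : x ∈ T.levelTuples δ) (hγδ : γ ≤ δ) :
    T.res γ ∘ x ∈ T.persistent X := by
  refine ⟨(hX.res_comp_mem hT ⟨hx.1, hxδ⟩ hγδ).1, fun γ' hγ' hle => ?_⟩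
  have hlev : ∀ i, T.lev (T.res γ (x i)) = γ := fun i => hT.lev_res (hxδ i ▸ hγδ)
  rcases le_or_gt γ' δ with hγ'δ | hδγ'
  · refine ⟨_, hX.res_comp_mem hT ⟨hx.1, hxδ⟩ hγ'δ, fun i => ?_⟩
    exact hT.res_le_res (hlev i ▸ hle i) (hxδ i ▸ hγ'δ)
  · obtain ⟨y, hy, hxy⟩ := hx.2 γ' hγ' fun i => (hxδ i).trans_le hδγ'.le
    exact ⟨y, hy, fun i => hT.le_trans (hT.res_le (hxδ i ▸ hγδ)) (hxy i)⟩

theorem persistent_extendable [Finite ι] (hT : T.IsOmega1Tree) (hX : T.IsDownwardClosed X) :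
    T.Extendable (T.persistent X) := by
  rintro γ δ hγδ hδ x ⟨hx, hxγ⟩
  obtain ⟨y, ⟨⟨-, hyδ⟩, hxy⟩, hyp⟩ := exists_mem_persistent hT hX hδ
    (E := {y ∈ X ∩ T.levelTuples δ | ∀ i, T.le (x i) (y i)}) (fun y hy => hy.1)
    fun δ' hδδ' hδ' => by
      obtain ⟨z, hz, hxz⟩ := hx.2 δ' hδ' fun i => (hxγ i).trans_le (hγδ.trans hδδ')
      refine ⟨z, hz, hX.res_comp_mem hT.1 hz hδδ', fun i => ?_⟩
      rw [← hT.1.res_eq_of_le (hxz i) (hxγ i)]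
      exact hT.1.res_le_res hγδ (hz.2 i ▸ hδδ')
  exact ⟨y, ⟨hyp, hyδ⟩, hxy⟩

theorem persistent_inter_levelTuples_nonempty [Finite ι] (hT : T.IsOmega1Tree)
    (hX : T.IsDownwardClosed X) (hXlev : ∀ x ∈ X, ∃ o, ∀ i, T.lev (x i) = o)
    (hXunc : ¬ X.Countable) {γ : Ordinal} (hγ : γ < omega1) :
    (T.persistent X ∩ T.levelTuples γ).Nonempty := by
  obtain ⟨y, hy, hyp⟩ := exists_mem_persistent hT hX hγ subset_rfl fun δ hγδ hδ => by
    obtain ⟨z, hz⟩ := hX.exists_mem_levelTuples hT hXlev hXunc hδ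
    exact ⟨z, hz, hX.res_comp_mem hT.1 hz hγδ⟩
  exact ⟨y, hyp, hy.2⟩

theorem persistent_not_countable [Finite ι] [Nonempty ι] (hT : T.IsOmega1Tree)
    (hX : T.IsDownwardClosed X) (hXlev : ∀ x ∈ X, ∃ o, ∀ i, T.lev (x i) = o)
    (hXunc : ¬ X.Countable) : ¬ (T.persistent X).Countable := by
  obtain ⟨i₀⟩ := ‹Nonempty ι›
  refine not_countable_of_unbounded (fun x => T.lev (x i₀)) (fun x _ => hT.2.1 _) fun b hb => ?_
  obtain ⟨x, hx, hxb⟩ := persistent_inter_levelTuples_nonempty hT hX hXlev hXunc hb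
  exact ⟨x, hx, (hxb i₀).ge⟩

theorem mem_persistent_iff_exists_extension (hT : T.IsTree) (hX : T.IsDownwardClosed X)
    (hext : T.Extendable (T.persistent X)) {γ₀ γ₁ : Ordinal} (h01 : γ₀ ≤ γ₁)
    (h1 : γ₁ < omega1) {x : ι → α} (hx : x ∈ T.levelTuples γ₀) :
    x ∈ T.persistent X ↔ ∃ y ∈ T.persistent X, (∀ i, T.lev (y i) = γ₁) ∧ ∀ i, T.le (x i) (y i) := by
  refine ⟨fun hxp => ?_, fun ⟨y, hy, hyγ₁, hxy⟩ => ?_⟩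
  · obtain ⟨y, ⟨hy, hyγ₁⟩, hxy⟩ := hext γ₀ γ₁ h01 h1 x ⟨hxp, hx⟩
    exact ⟨y, hy, hyγ₁, hxy⟩
  · convert res_comp_mem_persistent hT hX hy hyγ₁ h01
    exact funext fun i => (hT.res_eq_of_le (hxy i) (hx i)).symm

theorem Blocks.image_res [DecidableEq α] (hT : T.IsTree) (hY : T.Extendable Y) {γ δ : Ordinal}
    (hγδ : γ ≤ δ) (hδ : δ < omega1) {t : Finset α} (ht : T.Blocks Y δ t) :
    T.Blocks Y γ (t.image (T.res γ)) := by
  intro x hx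
  obtain ⟨y, hy, hxy⟩ := hY γ δ hγδ hδ x hx
  obtain ⟨i, hi⟩ := ht y hy
  exact ⟨i, Finset.mem_image.mpr ⟨y i, hi, hT.res_eq_of_le (hxy i) (hx.2 i)⟩⟩

theorem IsOmega1Tree.exists_uncountable_chain_of_forall_blocks [Finite ι]
    (hT : T.IsOmega1Tree) (hY : T.Extendable Y)
    (hne : ∀ γ < omega1, (Y ∩ T.levelTuples γ).Nonempty)
    (hblk : ∀ γ < omega1, ∃ t, T.Blocks Y γ t) : ∃ s, T.IsChain' s ∧ ¬ s.Countable := by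
  classical
  let k (γ : Ordinal) : ℕ := sInf {m | ∃ t, T.Blocks Y γ t ∧ t.card = m}
  have hk_le {γ t} (ht : T.Blocks Y γ t) : k γ ≤ t.card := Nat.sInf_le ⟨t, ht, rfl⟩
  have hk_mem {γ} (hγ : γ < omega1) : ∃ t, T.Blocks Y γ t ∧ t.card = k γ := by
    obtain ⟨t, ht⟩ := hblk γ hγ
    exact Nat.sInf_mem (s := {m | ∃ t, T.Blocks Y γ t ∧ t.card = m}) ⟨t.card, t, ht, rfl⟩
  have hk_mono : MonotoneOn k (Iio omega1) := fun γ _ δ hδ hγδ => by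
    obtain ⟨t, ht, hcard⟩ := hk_mem hδ
    exact (hk_le (ht.image_res hT.1 hY hγδ hδ)).trans (hcard ▸ Finset.card_image_le)
  obtain ⟨β, hβ, hk⟩ := exists_forall_ge_eq_of_monotoneOn hk_mono
  -- Past `β` the minimum size is constant, so minimum blocking sets project onto minimum
  -- blocking sets.
  let U : Set α := {z | ∃ γ, β ≤ γ ∧ γ < omega1 ∧ T.lev z = γ ∧
    ∃ t, T.Blocks Y γ t ∧ t.card = k γ ∧ z ∈ t}
  refine hT.exists_uncountable_chain_of_finite_levels (U := U) hβ (fun γ _ _ => ?_)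
    (fun γ hβγ hγ => ?_) ?_
  · refine ((finite_setOf_meets_card_eq _ (k γ) fun t ht => hk_le ht).biUnion
      fun t _ => t.finite_toSet).subset ?_
    rintro z ⟨⟨_, -, -, rfl, t, ht, hcard, hz⟩, rfl⟩
    exact mem_biUnion ⟨ht, hcard⟩ hz
  · obtain ⟨t, ht, hcard⟩ := hk_mem hγ
    obtain ⟨x, hx⟩ := hne γ hγ
    obtain ⟨i, hi⟩ := ht x hx
    exact ⟨x i, ⟨γ, hβγ, hγ, hx.2 i, t, ht, hcard, hi⟩, hx.2 i⟩
  · rintro z ⟨δ, hβδ, hδ, rfl, t, ht, hcard, hz⟩ γ hβγ hγδ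
    have hγ := hγδ.trans_lt hδ
    have ht' := ht.image_res hT.1 hY hγδ hδ
    refine ⟨γ, hβγ, hγ, hT.1.lev_res hγδ, _, ht', le_antisymm ?_ (hk_le ht'),
      Finset.mem_image_of_mem _ hz⟩
    calc (t.image (T.res γ)).card ≤ t.card := Finset.card_image_le
      _ = k γ := by rw [hcard, hk _ hβδ hδ, hk γ hβγ hγ]

end PreTree

/-- if `T` is Aronszajn and `X ⊆ ⁿT` is uncountable and downward closed,
then some uncountable `Y ⊆ X` is level-coherent and dispersed above some level `β`. -/
theorem exists_dispersed_coherent_subfamily {α : Type} (T : PreTree α) (hT : T.Aronszajn)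
    (n : ℕ) (X : Set (Fin (n+1) → α))
    (hXlev : ∀ x ∈ X, ∃ o, ∀ i, T.lev (x i) = o)
    (hXunc : ¬ X.Countable)
    (hXdc : ∀ x ∈ X, ∀ y : Fin (n+1) → α, (∃ o, ∀ i, T.lev (y i) = o) →
      (∀ i, T.le (y i) (x i)) → y ∈ X) :
    ∃ β, β < omega1 ∧ ∃ Y ⊆ X, ¬ Y.Countable ∧
      (∀ γ₀ γ₁, β ≤ γ₀ → γ₀ < γ₁ → γ₁ < omega1 →
        ∀ x : Fin (n+1) → α, (∀ i, T.lev (x i) = γ₀) →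
          (x ∈ Y ↔ ∃ y ∈ Y, (∀ i, T.lev (y i) = γ₁) ∧ ∀ i, T.le (x i) (y i))) ∧
      (∀ γ, β ≤ γ → γ < omega1 → ∀ t : Set α, t.Finite → t ⊆ {z | T.lev z = γ} →
        ∃ x ∈ Y, (∀ i, T.lev (x i) = γ) ∧ ∀ i, x i ∉ t) := by
  classical
  have hext := PreTree.persistent_extendable hT.1 hXdc
  obtain ⟨β, hβ, hdisp⟩ : ∃ β < omega1, ∀ t, ¬ T.Blocks (T.persistent X) β t := by
    by_contra! hblk
    obtain ⟨s, hchain, hs⟩ := hT.1.exists_uncountable_chain_of_forall_blocks hext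
      (fun _ => PreTree.persistent_inter_levelTuples_nonempty hT.1 hXdc hXlev hXunc) hblk
    exact hs (hT.2 s hchain)
  refine ⟨β, hβ, T.persistent X, sep_subset _ _,
    PreTree.persistent_not_countable hT.1 hXdc hXlev hXunc, fun γ₀ γ₁ _ h01 h1 x hx =>
      PreTree.mem_persistent_iff_exists_extension hT.1.1 hXdc hext h01.le h1 hx, ?_⟩
  intro γ hβγ hγ t ht _
  by_contra! hmeet
  exact hdisp _ (PreTree.Blocks.image_res hT.1.1 hext hβγ hγ (t := ht.toFinset)
    fun x hx => by simpa using hmeet x hx.1 hx.2)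
end
end

section
/- (Extension Lemma) Let T be an Aronszajn tree. If p ∈ S(T) and last(p) < μ < ω₁, then there is q ∈ S(T) extending p with last(q) = μ and Γ(q) = Γ(p). Moreover, if h : T_μ → ℚ is a finite function which bounds f(p), then q can be chosen so that in addition f(q)(x) < h(x) for every x ∈ dom h. -/
noncomputable section

open Cardinal Set

universe u v w

/-! By induction on `μ`. Choose levels `last p = β₀ ≤ β₁ ≤ ⋯ < μ` cofinal in `μ`, and enumerate
the countably many tasks `(H, t)` (`H ∈ Γ(μ)`, `t ⊆ T_μ` finite) and the nodes of `T_μ`. Build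
conditions `qₙ` of height `βₙ` together with finite commitments `cₙ : T_μ → ℚ`, the future values
on `T_μ`, keeping `f(qₙ)(x↾βₙ) < cₙ(x)`. At step `n`, since `Γ(βₙ) = Γ(μ)↾βₙ` is fulfilled by `qₙ`,
some `h ∈ H` avoids `t` and the committed nodes and bounds `f(qₙ)`: commit to values below `h`
and to a value at the `n`-th node. Then climb to `βₙ₊₁` by the induction hypothesis, applied to
the minima of the commitments over the nodes of `T_{βₙ₊₁}`. The union of the `qₙ` together with
the union of the commitments is the required condition of height `μ`. -/

open Classical

theorem exists_monotone_cofinal {μ ρ : Ordinal.{0}} (hμ : μ < omega1) (hρ : ρ < μ) :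
    ∃ β : ℕ → Ordinal, Monotone β ∧ β 0 = ρ ∧ (∀ n, β n < μ) ∧ ∀ ξ < μ, ∃ n, ξ ≤ β n := by
  have hcount : (Iio μ).Countable := by
    rw [← Cardinal.le_aleph0_iff_set_countable, Cardinal.mk_Iio_ordinal, Cardinal.lift_le_aleph0,
      ← Order.lt_succ_iff, Cardinal.succ_aleph0, ← Cardinal.lt_ord]
    exact hμ
  obtain ⟨g, hg⟩ := hcount.exists_eq_range ⟨ρ, hρ⟩
  have hgμ : ∀ n, g n < μ := fun n => (hg ▸ mem_range_self n : g n ∈ Iio μ)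
  refine ⟨fun n => Nat.rec ρ (fun n b => max b (g n)) n,
    monotone_nat_of_le_succ fun n => le_max_left _ _, rfl, fun n => ?_, fun ξ hξ => ?_⟩
  · induction n with
    | zero => exact hρ
    | succ n ih => exact max_lt ih (hgμ n)
  · obtain ⟨n, rfl⟩ : ξ ∈ range g := hg ▸ hξ
    exact ⟨n + 1, le_max_right _ _⟩

theorem exists_seq_of_forall_exists_succ {S : ℕ → Type*} (R : ∀ n, S n → S (n + 1) → Prop)
    (s₀ : S 0) (h : ∀ n (s : S n), ∃ s', R n s s') :
    ∃ F : ∀ n, S n, F 0 = s₀ ∧ ∀ n, R n (F n) (F (n + 1)) := by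
  choose next hnext using h
  exact ⟨fun n => Nat.rec s₀ next n, rfl, fun n => hnext n _⟩

namespace PreTree

variable {α : Type u} {T : PreTree α}

/-- The paper's `x↾γ`; junk (`x` itself) unless `γ ≤ lev x`. -/
def restr (T : PreTree α) (x : α) (γ : Ordinal) : α :=
  if h : ∃ y, T.lt y x ∧ T.lev y = γ then h.choose else x

theorem IsTree.le_trans_s5 (hT : T.IsTree) {x y z : α} (hxy : T.le x y) (hyz : T.le y z) :
    T.le x z := by
  rcases hxy with rfl | hxy
  · exact hyz
  rcases hyz with rfl | hyz
  · exact Or.inr hxy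
  · exact Or.inr (hT.1 _ _ _ hxy hyz)

theorem IsTree.lev_le_of_le (hT : T.IsTree) {x y : α} (h : T.le x y) : T.lev x ≤ T.lev y := by
  rcases h with rfl | h
  exacts [le_rfl, (hT.2.1 _ _ h).le]

theorem IsTree.eq_of_le_of_lev_eq (hT : T.IsTree) {x y : α} (h : T.le x y)
    (hlev : T.lev x = T.lev y) : x = y := by
  rcases h with rfl | h
  exacts [rfl, absurd hlev (hT.2.1 _ _ h).ne]

theorem IsTree.le_of_le_of_lev_le (hT : T.IsTree) {x y z : α} (hxz : T.le x z)
    (hyz : T.le y z) (hlev : T.lev x ≤ T.lev y) : T.le x y := by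
  rcases hxz with rfl | hxz
  · exact Or.inl (hT.eq_of_le_of_lev_eq hyz (le_antisymm (hT.lev_le_of_le hyz) hlev)).symm
  rcases hyz with rfl | hyz
  · exact Or.inr hxz
  rcases hT.2.2.1 z x y hxz hyz with rfl | h | h
  · exact Or.inl rfl
  · exact Or.inr h
  · exact absurd hlev (not_le.mpr (hT.2.1 _ _ h))

theorem IsTree.restr_spec (hT : T.IsTree) {x : α} {γ : Ordinal} (hγ : γ ≤ T.lev x) :
    T.le (T.restr x γ) x ∧ T.lev (T.restr x γ) = γ := by
  unfold restr
  split_ifs with h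
  · exact ⟨Or.inr h.choose_spec.1, h.choose_spec.2⟩
  · refine ⟨Or.inl rfl, le_antisymm ?_ hγ⟩
    by_contra hlt
    obtain ⟨y, hy⟩ := (hT.2.2.2 x γ (not_le.mp hlt)).exists
    exact h ⟨y, hy⟩

theorem IsTree.restr_eq (hT : T.IsTree) {x y : α} (hyx : T.le y x) : T.restr x (T.lev y) = y :=
  have hspec := hT.restr_spec (hT.lev_le_of_le hyx)
  hT.eq_of_le_of_lev_eq (hT.le_of_le_of_lev_le hspec.1 hyx hspec.2.le) hspec.2

end PreTree

variable {α : Type u} {T : PreTree α}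

def SubFun {β : Type v} (f g : α → Option β) : Prop := ∀ x, f x ≠ none → g x = f x

theorem SubFun.refl {β : Type v} (f : α → Option β) : SubFun f f := fun _ _ => rfl

theorem SubFun.trans {β : Type v} {f g k : α → Option β} (hfg : SubFun f g) (hgk : SubFun g k) :
    SubFun f k := fun x hx => (hgk x (by rwa [hfg x hx])).trans (hfg x hx)

theorem SubFun.eq_some {β : Type v} {f g : α → Option β} (hfg : SubFun f g) {x : α} {b : β}
    (hx : f x = some b) : g x = some b :=
  (hfg x (by simp [hx])).trans hx

theorem SubFun.of_le {β : Type v} {F : ℕ → α → Option β} (hF : ∀ n, SubFun (F n) (F (n + 1)))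
    {m n : ℕ} (hmn : m ≤ n) : SubFun (F m) (F n) := by
  induction n, hmn using Nat.le_induction with
  | base => exact SubFun.refl _
  | succ n _ ih => exact ih.trans (hF n)

theorem SubFun.or_left {β : Type v} (f g : α → Option β) : SubFun f (fun x => (f x).or (g x)) := by
  intro x hx
  obtain ⟨b, hb⟩ := Option.ne_none_iff_exists'.mp hx
  simp [hb]

theorem SubFun.or_right {β : Type v} {f g : α → Option β} (hfg : ∀ x, g x ≠ none → f x = none) :
    SubFun g (fun x => (f x).or (g x)) := by
  intro x hx
  simp [hfg x hx]

/-- Meaningful for increasing sequences, where the choice of the index does not matter. -/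
def seqUnion {β : Type v} (F : ℕ → α → Option β) (x : α) : Option β :=
  if h : ∃ n, F n x ≠ none then F h.choose x else none

theorem subFun_seqUnion {β : Type v} {F : ℕ → α → Option β} (hF : ∀ n, SubFun (F n) (F (n + 1)))
    (n : ℕ) : SubFun (F n) (seqUnion F) := by
  intro x hx
  have h : ∃ n, F n x ≠ none := ⟨n, hx⟩
  rw [seqUnion, dif_pos h]
  rcases le_total h.choose n with hle | hle
  · exact (SubFun.of_le hF hle x h.choose_spec).symm
  · exact SubFun.of_le hF hle x hx

theorem exists_of_seqUnion_eq_some {β : Type v} {F : ℕ → α → Option β} {x : α} {b : β}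
    (hx : seqUnion F x = some b) : ∃ n, F n x = some b := by
  unfold seqUnion at hx
  split_ifs at hx with h
  exact ⟨_, hx⟩

def LtOnDom (f h : α → Option ℚ) : Prop := ∀ x v, h x = some v → ∃ w, f x = some w ∧ w < v

theorem LtOnDom.mono {f g h : α → Option ℚ} (hfh : LtOnDom f h) (hfg : SubFun f g) :
    LtOnDom g h := fun x v hv =>
  let ⟨w, hw, hwv⟩ := hfh x v hv
  ⟨w, hfg.eq_some hw, hwv⟩

theorem pdom_or (f g : α → Option ℚ) : pdom (fun x => (f x).or (g x)) = pdom f ∪ pdom g := by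
  ext x
  simp only [pdom, mem_ofPred_eq, mem_union, ne_eq, Option.or_eq_none_iff, not_and_or]

theorem IsApprox.exists_bounds (hT : T.IsTree) {a : Ordinal} {f : α → Option ℚ}
    (hf : IsApprox T a f) {s : Set α} (hs : ∀ x ∈ s, a ≤ T.lev x) :
    ∃ C : α → Option ℚ, pdom C = s ∧ Bounds T a f C := by
  refine ⟨fun x => if x ∈ s then (f (T.restr x a)).map (· + 1) else none, ?_, ?_⟩
  · ext x
    by_cases hx : x ∈ s
    · simpa [pdom, hx] using (hf.2.1 _).mpr (hT.restr_spec (hs x hx)).2.le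
    · simp [pdom, hx]
  · intro x v hv
    dsimp only at hv
    split_ifs at hv with hx
    obtain ⟨r, hr, rfl⟩ := Option.map_eq_some_iff.mp hv
    obtain ⟨hle, hlev⟩ := hT.restr_spec (hs x hx)
    exact ⟨_, r, hle, hlev, hr, by linarith⟩

namespace Bounds

theorem or {a : Ordinal} {f h h' : α → Option ℚ} (hh : Bounds T a f h) (hh' : Bounds T a f h') :
    Bounds T a f (fun x => (h x).or (h' x)) := fun x v hv => by
  rcases Option.or_eq_some_iff.mp hv with hv | ⟨_, hv⟩
  exacts [hh x v hv, hh' x v hv]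

theorem of_ltOnDom {a : Ordinal} {f h : α → Option ℚ} (hfh : LtOnDom f h)
    (hlev : pdom h ⊆ {x | T.lev x = a}) : Bounds T a f h := fun x v hv =>
  let ⟨w, hw, hwv⟩ := hfh x v hv
  ⟨x, w, Or.inl rfl, hlev (by simp [pdom, hv]), hw, hwv⟩

theorem of_le (hT : T.IsTree) {a b : Ordinal} {f g h : α → Option ℚ} (hab : a ≤ b)
    (hf : IsApprox T a f) (hg : IsApprox T b g) (hfg : SubFun f g) (hgh : Bounds T b g h) :
    Bounds T a f h := fun x v hv => by
  obtain ⟨y, r, hyx, hy, hr, hrv⟩ := hgh x v hv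
  obtain ⟨hzy, hz⟩ := hT.restr_spec (hy ▸ hab : a ≤ T.lev y)
  set z := T.restr y a
  obtain ⟨s, hs⟩ := Option.ne_none_iff_exists'.mp ((hf.2.1 z).mpr hz.le)
  refine ⟨z, s, hT.le_trans_s5 hzy hyx, hz, hs, ?_⟩
  rcases hzy with hzy | hzy
  · rw [← hzy, hfg.eq_some hs] at hr
    exact (Option.some_injective _ hr) ▸ hrv
  · exact (hg.2.2 _ _ _ _ hzy (hfg.eq_some hs) hr).trans hrv

theorem exists_between (hT : T.IsTree) {a : Ordinal} {f h : α → Option ℚ}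
    (hfh : Bounds T a f h) :
    ∃ h' : α → Option ℚ, pdom h' = pdom h ∧ Bounds T a f h' ∧ LtOnDom h' h := by
  refine ⟨fun x => (h x).map fun v => ((f (T.restr x a)).getD 0 + v) / 2, ?_, ?_, ?_⟩
  · ext x
    simp [pdom]
  · intro x w hw
    obtain ⟨v, hv, rfl⟩ := Option.map_eq_some_iff.mp hw
    obtain ⟨y, r, hyx, rfl, hr, hrv⟩ := hfh x v hv
    rw [hT.restr_eq hyx, hr, Option.getD_some]
    exact ⟨y, r, hyx, rfl, hr, by linarith⟩
  · intro x v hv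
    obtain ⟨y, r, hyx, rfl, hr, hrv⟩ := hfh x v hv
    refine ⟨_, by simp only [hv, Option.map_some]; rfl, ?_⟩
    rw [hT.restr_eq hyx, hr, Option.getD_some]
    linarith

/-- `B(y)` is the minimum of `C` over the fibre of `y` under `x ↦ x↾γ`. -/
theorem exists_proj (hT : T.IsTree) {γ : Ordinal} {C : α → Option ℚ}
    (hC : (pdom C).Finite) (hlev : ∀ x ∈ pdom C, γ ≤ T.lev x) :
    ∃ B : α → Option ℚ, (pdom B).Finite ∧ pdom B ⊆ {y | T.lev y = γ} ∧
      (∀ a ≤ γ, ∀ f, Bounds T a f C → Bounds T a f B) ∧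
      ∀ g, LtOnDom g B → Bounds T γ g C := by
  have hmin : ∀ y, ∃ m : Option ℚ,
      (∀ b, m = some b → ∃ x, C x = some b ∧ T.restr x γ = y) ∧
      ∀ x c, C x = some c → T.restr x γ = y → ∃ b, m = some b ∧ b ≤ c := by
    intro y
    set F := {x ∈ pdom C | T.restr x γ = y}
    by_cases hF : F.Nonempty
    · obtain ⟨x₀, ⟨hx₀, hx₀y⟩, hmin⟩ :=
        Set.exists_min_image F (fun x => (C x).getD 0) (hC.subset (sep_subset _ _)) hF
      obtain ⟨b, hb⟩ := Option.ne_none_iff_exists'.mp hx₀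
      refine ⟨some b, fun b' hb' => ⟨x₀, hb.trans hb', hx₀y⟩, fun x c hx hxy => ⟨b, rfl, ?_⟩⟩
      simpa [hb, hx] using hmin x ⟨by simp [pdom, hx], hxy⟩
    · refine ⟨none, fun _ h => by simp at h, fun x c hx hxy => absurd ⟨x, ?_, hxy⟩ hF⟩
      simp [pdom, hx]
  choose B hB_val hB_min using hmin
  have hB_dom : pdom B ⊆ (T.restr · γ) '' pdom C := fun y hy => by
    obtain ⟨b, hb⟩ := Option.ne_none_iff_exists'.mp hy
    obtain ⟨x, hx, rfl⟩ := hB_val y b hb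
    exact ⟨x, by simp [pdom, hx], rfl⟩
  refine ⟨B, (hC.image _).subset hB_dom, fun y hy => ?_, fun a ha f hf y b hb => ?_,
    fun g hg x c hx => ?_⟩
  · obtain ⟨x, hx, rfl⟩ := hB_dom hy
    exact (hT.restr_spec (hlev x hx)).2
  · obtain ⟨x, hx, rfl⟩ := hB_val y b hb
    obtain ⟨z, r, hzx, hz, hr, hrb⟩ := hf x b hx
    have hy := hT.restr_spec (hlev x (by simp [pdom, hx]))
    exact ⟨z, r, hT.le_of_le_of_lev_le hzx hy.1 (by rw [hz, hy.2]; exact ha), hz, hr, hrb⟩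
  · obtain ⟨b, hb, hbc⟩ := hB_min _ x c hx rfl
    obtain ⟨w, hw, hwb⟩ := hg _ b hb
    obtain ⟨hle, hlev⟩ := hT.restr_spec (hlev x (by simp [pdom, hx]))
    exact ⟨_, w, hle, hlev, hw, hwb.trans_le hbc⟩

end Bounds

theorem IsPromise.pdom_finite_of_mem {b γ : Ordinal} {Γ : Ordinal → Set (Set (α → Option ℚ))}
    (hΓ : IsPromise T b Γ) (hbγ : b ≤ γ) (hγ : γ < omega1) {H : Set (α → Option ℚ)}
    (hH : H ∈ Γ γ) {g : α → Option ℚ} (hg : g ∈ H) :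
    (pdom g).Finite ∧ pdom g ⊆ {x | T.lev x = γ} := by
  obtain ⟨n, hn⟩ := hΓ.2.1
  obtain ⟨hfin, -, hlev⟩ := hn γ hbγ hγ H hH g hg
  exact ⟨hfin, hlev⟩

/-- The promise puts `H↾(last q)` into `Γ(last q)`; fulfil it avoiding `t↾(last q)`. -/
theorem SCond.exists_bounds_of_mem (hT : T.IsTree) (q : SCond T) {μ : Ordinal} (hq : q.last < μ)
    (hμ : μ < omega1) {H : Set (α → Option ℚ)} (hH : H ∈ q.Γ μ) {t : Set α} (ht : t.Finite)
    (htμ : t ⊆ {x | T.lev x = μ}) :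
    ∃ g ∈ H, (∀ x ∈ t, g x = none) ∧ Bounds T q.last q.f g := by
  have hres : {h' | ∃ g ∈ H, IsRestrictTo T q.last g h'} ∈ q.Γ q.last := by
    rw [q.promise.2.2.2 _ _ q.base_le hq hμ]
    exact ⟨H, hH, rfl⟩
  have hspec : ∀ x, T.lev x = μ → T.le (T.restr x q.last) x ∧ T.lev (T.restr x q.last) = q.last :=
    fun x hx => hT.restr_spec (hx ▸ hq.le)
  obtain ⟨h', ⟨g, hg, hgh'⟩, hbd, havoid⟩ := q.fulfills _ hres ((T.restr · q.last) '' t)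
    (ht.image _) (by rintro _ ⟨x, hx, rfl⟩; exact (hspec x (htμ hx)).2)
  have hglev := (q.promise.pdom_finite_of_mem (q.base_le.trans hq.le) hμ hH hg).2
  refine ⟨g, hg, fun x hx => ?_, fun x v hv => ?_⟩
  · by_contra hne
    have hx := hspec x (htμ hx)
    exact (hgh'.1 _).mpr ⟨hx.2, x, hx.1, hne⟩ (havoid _ ⟨x, ‹x ∈ t›, rfl⟩)
  · have hx := hspec x (hglev (by simp [pdom, hv]))
    obtain ⟨y, r, hy, hylev, hr, hrv⟩ :=
      hbd _ v ((hgh'.2 _ x hx.2 hx.1 (by simp [hv])).trans hv)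
    exact ⟨y, r, hT.le_trans_s5 hy hx.1, hylev, hr, hrv⟩

def ExtensionProperty (T : PreTree α) (μ : Ordinal) : Prop :=
  ∀ p : SCond T, p.last < μ → ∀ h : α → Option ℚ, (pdom h).Finite →
    pdom h ⊆ {x | T.lev x = μ} → Bounds T p.last p.f h →
    ∃ q : SCond T, SExtends q p ∧ q.last = μ ∧ q.base = p.base ∧ q.Γ = p.Γ ∧ LtOnDom q.f h

/-- `commit` records finitely many values already fixed for the final approximation on `T_μ`. -/
structure Stage (T : PreTree α) (Γ : Ordinal → Set (Set (α → Option ℚ))) (μ γ : Ordinal) where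
  cond : SCond T
  commit : α → Option ℚ
  last_eq : cond.last = γ
  Γ_eq : cond.Γ = Γ
  commit_finite : (pdom commit).Finite
  commit_level : pdom commit ⊆ {x | T.lev x = μ}
  bounds : Bounds T γ cond.f commit

section Limit

variable {μ : Ordinal} {β : ℕ → Ordinal} {F : ℕ → α → Option ℚ}

theorem seqUnion_eq_none_of_le_lev (hF : ∀ n, IsApprox T (β n) (F n)) (hβμ : ∀ n, β n < μ)
    {x : α} (hx : μ ≤ T.lev x) : seqUnion F x = none := by
  rw [seqUnion, dif_neg]
  rintro ⟨n, hn⟩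
  exact (((hF n).2.1 x).mp hn).trans_lt (hβμ n) |>.not_ge hx

theorem isApprox_seqUnion_or (hT : T.IsTree) (hμ : μ < omega1) (hβμ : ∀ n, β n < μ)
    (hβ : ∀ ξ < μ, ∃ n, ξ ≤ β n) (hF : ∀ n, IsApprox T (β n) (F n))
    (hFF : ∀ n, SubFun (F n) (F (n + 1))) {v : α → Option ℚ} (hv : pdom v = {x | T.lev x = μ})
    (hFv : ∀ n, Bounds T (β n) (F n) v) :
    IsApprox T μ (fun x => (seqUnion F x).or (v x)) := by
  have hlow : ∀ n x, T.lev x ≤ β n → (seqUnion F x).or (v x) = F n x := fun n x hx =>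
    ((subFun_seqUnion hFF n).trans (SubFun.or_left _ v)) x (((hF n).2.1 x).mpr hx)
  have htop : ∀ x, μ ≤ T.lev x → (seqUnion F x).or (v x) = v x := fun x hx => by
    rw [seqUnion_eq_none_of_le_lev hF hβμ hx, Option.none_or]
  have hv' : ∀ x, v x ≠ none ↔ T.lev x = μ := fun x => Set.ext_iff.mp hv x
  refine ⟨hμ, fun x => ?_, fun x y qx qy hxy hx hy => ?_⟩
  · dsimp only
    rcases lt_or_ge (T.lev x) μ with hxμ | hxμ
    · obtain ⟨n, hn⟩ := hβ _ hxμ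
      rw [hlow n x hn, (hF n).2.1]
      exact ⟨fun _ => hxμ.le, fun _ => hn⟩
    · rw [htop x hxμ, hv']
      exact ⟨le_of_eq, fun h => le_antisymm h hxμ⟩
  dsimp only at hx hy
  have hxy' := hT.2.1 _ _ hxy
  rcases lt_or_ge (T.lev y) μ with hyμ | hyμ
  · obtain ⟨n, hn⟩ := hβ _ hyμ
    rw [hlow n y hn] at hy
    rw [hlow n x (hxy'.le.trans hn)] at hx
    exact (hF n).2.2 x y qx qy hxy hx hy
  rw [htop y hyμ] at hy
  obtain ⟨n, hn⟩ := hβ (T.lev x) ((hv' y).mp (by simp [hy]) ▸ hxy')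
  obtain ⟨z, r, hzy, hz, hr, hrv⟩ := hFv n y qy hy
  rw [hlow n x hn] at hx
  rcases hT.le_of_le_of_lev_le (Or.inr hxy) hzy (hz ▸ hn) with rfl | hxz
  · exact (Option.some_injective _ (hx.symm.trans hr)) ▸ hrv
  · exact ((hF n).2.2 _ _ _ _ hxz hx hr).trans hrv

end Limit

namespace Stage

variable {Γ : Ordinal → Set (Set (α → Option ℚ))} {μ γ : Ordinal}

theorem approx (s : Stage T Γ μ γ) : IsApprox T γ s.cond.f := by
  have h := s.cond.approx
  rw [s.last_eq] at h
  exact h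

theorem exists_commit (hT : T.IsTree) (hμ : μ < omega1) (hγ : γ < μ) (s : Stage T Γ μ γ)
    {H : Set (α → Option ℚ)} (hH : H ∈ Γ μ) {t : Set α} (ht : t.Finite)
    (htμ : t ⊆ {x | T.lev x = μ}) {x : α} (hx : T.lev x = μ) :
    ∃ s' : Stage T Γ μ γ, s'.cond = s.cond ∧ SubFun s.commit s'.commit ∧
      (∃ g ∈ H, (∀ y ∈ t, g y = none) ∧ LtOnDom s'.commit g) ∧ s'.commit x ≠ none := by
  have hlast := s.last_eq
  have hq : s.cond.last < μ := by rw [hlast]; exact hγ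
  have hH' : H ∈ s.cond.Γ μ := by rw [s.Γ_eq]; exact hH
  -- avoiding the old commitments leaves the values on `dom g` free to be chosen below `g`
  obtain ⟨g, hgH, hgt, hgb⟩ := s.cond.exists_bounds_of_mem hT hq hμ hH'
    (ht.union s.commit_finite) (union_subset htμ s.commit_level)
  obtain ⟨hgfin, hglev⟩ :=
    s.cond.promise.pdom_finite_of_mem (s.cond.base_le.trans hq.le) hμ hH' hgH
  rw [hlast] at hgb
  obtain ⟨g', hg'dom, hg'b, hg'g⟩ := hgb.exists_between hT
  obtain ⟨N, hNdom, hNb⟩ := s.approx.exists_bounds hT (s := {x})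
    (by rintro _ rfl; exact hx ▸ hγ.le)
  set C' := fun y => ((s.commit y).or (g' y)).or (N y)
  have hC'dom : pdom C' = pdom s.commit ∪ pdom g ∪ {x} := by
    simp only [C', pdom_or, hg'dom, hNdom]
  refine ⟨⟨s.cond, C', hlast, s.Γ_eq, ?_, ?_, (s.bounds.or hg'b).or hNb⟩, rfl, ?_,
    ⟨g, hgH, fun y hy => hgt y (Or.inl hy), fun y v hv => ?_⟩, ?_⟩
  · rw [hC'dom]
    exact (s.commit_finite.union hgfin).union (finite_singleton x)
  · rw [hC'dom]
    exact union_subset (union_subset s.commit_level hglev) (by rintro _ rfl; exact hx)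
  · intro y hy
    obtain ⟨c, hc⟩ := Option.ne_none_iff_exists'.mp hy
    simp [C', hc]
  · have hy : s.commit y = none := by
      by_contra hy
      exact absurd hv (by simp [hgt y (Or.inr hy)])
    obtain ⟨w, hw, hwv⟩ := hg'g y v hv
    exact ⟨w, by simp [C', hy, hw], hwv⟩
  · change x ∈ pdom C'
    simp [hC'dom]

theorem exists_advance (hT : T.IsTree) {γ' : Ordinal} (hγ : γ ≤ γ') (hγ' : γ' < μ)
    (hext : γ < γ' → ExtensionProperty T γ') (s : Stage T Γ μ γ) :
    ∃ s' : Stage T Γ μ γ', SubFun s.cond.f s'.cond.f ∧ s'.commit = s.commit := by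
  rcases hγ.lt_or_eq with hlt | rfl
  · obtain ⟨B, hBfin, hBlev, hB_of, hB_to⟩ := Bounds.exists_proj hT s.commit_finite
      (fun x hx => (s.commit_level hx).symm ▸ hγ'.le)
    have hBs : Bounds T s.cond.last s.cond.f B := by
      rw [s.last_eq]
      exact hB_of γ hγ _ s.bounds
    obtain ⟨q, hqs, hqlast, -, hqΓ, hqB⟩ :=
      hext hlt s.cond (by rw [s.last_eq]; exact hlt) B hBfin hBlev hBs
    exact ⟨⟨q, s.commit, hqlast, hqΓ.trans s.Γ_eq, s.commit_finite, s.commit_level,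
      hB_to _ hqB⟩, hqs.2.1, rfl⟩
  · exact ⟨s, SubFun.refl _, rfl⟩

theorem exists_next (hT : T.IsTree) (hμ : μ < omega1) {γ' : Ordinal} (hγ : γ ≤ γ')
    (hγ' : γ' < μ) (hext : γ < γ' → ExtensionProperty T γ') (s : Stage T Γ μ γ)
    {H : Set (α → Option ℚ)} (hH : H ∈ Γ μ) {t : Set α} (ht : t.Finite)
    (htμ : t ⊆ {x | T.lev x = μ}) {x : α} (hx : T.lev x = μ) :
    ∃ s' : Stage T Γ μ γ', SubFun s.cond.f s'.cond.f ∧ SubFun s.commit s'.commit ∧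
      (∃ g ∈ H, (∀ y ∈ t, g y = none) ∧ LtOnDom s'.commit g) ∧ s'.commit x ≠ none := by
  obtain ⟨s₁, hs₁, hC₁, htask, hnode⟩ :=
    s.exists_commit hT hμ (hγ.trans_lt hγ') hH ht htμ hx
  obtain ⟨s₂, hf₂, hC₂⟩ := s₁.exists_advance hT hγ hγ' hext
  exact ⟨s₂, hs₁ ▸ hf₂, hC₂ ▸ hC₁, hC₂ ▸ htask, hC₂ ▸ hnode⟩

/-- A commitment made at a later stage `m` bounds `f(S m)` at `β m`, hence `f(S n)` at `β n`. -/
theorem bounds_seqUnion (hT : T.IsTree) {β : ℕ → Ordinal} (hβ : Monotone β)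
    {S : ∀ n, Stage T Γ μ (β n)} (hSf : ∀ n, SubFun (S n).cond.f (S (n + 1)).cond.f)
    (hSC : ∀ n, SubFun (S n).commit (S (n + 1)).commit) (n : ℕ) :
    Bounds T (β n) (S n).cond.f (seqUnion fun m => (S m).commit) := by
  intro x c hx
  obtain ⟨m, hm⟩ := exists_of_seqUnion_eq_some hx
  have hmax := (S (max m n)).bounds
  exact hmax.of_le hT (hβ (le_max_right m n)) (S n).approx (S _).approx
    (SubFun.of_le hSf (le_max_right m n)) x c ((SubFun.of_le hSC (le_max_left m n)).eq_some hm)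

theorem exists_limit (hT : T.IsTree) (hμ : μ < omega1) {β : ℕ → Ordinal} (hβ : Monotone β)
    (hβμ : ∀ n, β n < μ) (hβcof : ∀ ξ < μ, ∃ n, ξ ≤ β n) (S : ∀ n, Stage T Γ μ (β n))
    (hSf : ∀ n, SubFun (S n).cond.f (S (n + 1)).cond.f)
    (hSC : ∀ n, SubFun (S n).commit (S (n + 1)).commit)
    (htask : ∀ H ∈ Γ μ, ∀ t : Set α, t.Finite → t ⊆ {x | T.lev x = μ} →
      ∃ n, ∃ g ∈ H, (∀ y ∈ t, g y = none) ∧ LtOnDom (S n).commit g)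
    (hnode : ∀ x, T.lev x = μ → ∃ n, (S n).commit x ≠ none) :
    ∃ r : SCond T, r.last = μ ∧ r.base = (S 0).cond.base ∧ r.Γ = Γ ∧
      ∀ n, SubFun (S n).cond.f r.f ∧ SubFun (S n).commit r.f := by
  set v := seqUnion fun n => (S n).commit
  set L := fun x => (seqUnion (fun n => (S n).cond.f) x).or (v x)
  have hvdom : pdom v = {x | T.lev x = μ} := by
    refine Subset.antisymm (fun x hx => ?_) (fun x hx => ?_)
    · obtain ⟨c, hc⟩ := Option.ne_none_iff_exists'.mp hx
      obtain ⟨n, hn⟩ := exists_of_seqUnion_eq_some hc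
      exact (S n).commit_level (by simp [pdom, hn])
    · obtain ⟨n, hn⟩ := hnode x hx
      exact fun h => hn (by rw [← subFun_seqUnion hSC n x hn]; exact h)
  have hvL : SubFun v L := SubFun.or_right fun x hx => by
    have hx : x ∈ pdom v := hx
    rw [hvdom] at hx
    exact seqUnion_eq_none_of_le_lev (fun n => (S n).approx) hβμ hx.ge
  have hbase : (S 0).cond.base ≤ μ :=
    ((S 0).cond.base_le.trans_eq (S 0).last_eq).trans (hβμ 0).le
  have hprom : IsPromise T (S 0).cond.base Γ := by
    have h := (S 0).cond.promise
    rw [(S 0).Γ_eq] at h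
    exact h
  refine ⟨⟨μ, L, (S 0).cond.base, Γ,
    isApprox_seqUnion_or hT hμ hβμ hβcof (fun n => (S n).approx) hSf hvdom
      (bounds_seqUnion hT hβ hSf hSC), hprom, hbase, fun H hH t ht htμ => ?_⟩,
    rfl, rfl, rfl, fun n => ⟨(subFun_seqUnion hSf n).trans (SubFun.or_left _ _),
      (subFun_seqUnion hSC n).trans hvL⟩⟩
  obtain ⟨n, g, hg, hgt, hgC⟩ := htask H hH t ht htμ
  exact ⟨g, hg, Bounds.of_ltOnDom ((hgC.mono (subFun_seqUnion hSC n)).mono hvL)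
    (hprom.pdom_finite_of_mem hbase hμ hH hg).2, hgt⟩

theorem exists_seq (hT : T.IsOmega1Tree) (hμ : μ < omega1)
    (hext : ∀ ν < μ, ExtensionProperty T ν) {β : ℕ → Ordinal} (hβ : Monotone β)
    (hβμ : ∀ n, β n < μ) (s₀ : Stage T Γ μ (β 0)) :
    ∃ S : ∀ n, Stage T Γ μ (β n), S 0 = s₀ ∧
      (∀ n, SubFun (S n).cond.f (S (n + 1)).cond.f) ∧
      (∀ n, SubFun (S n).commit (S (n + 1)).commit) ∧
      (∀ H ∈ Γ μ, ∀ t : Set α, t.Finite → t ⊆ {x | T.lev x = μ} →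
        ∃ n, ∃ g ∈ H, (∀ y ∈ t, g y = none) ∧ LtOnDom (S n).commit g) ∧
      ∀ x, T.lev x = μ → ∃ n, (S n).commit x ≠ none := by
  have hbase : s₀.cond.base ≤ μ :=
    (s₀.cond.base_le.trans_eq s₀.last_eq).trans (hβμ 0).le
  obtain ⟨hΓc, hΓne, -⟩ := s₀.cond.promise.2.2.1 μ hbase hμ
  rw [s₀.Γ_eq] at hΓc hΓne
  have hlevc := hT.2.2.1 μ hμ
  obtain ⟨e, he⟩ := (hΓc.prod (countable_ofPred_finite_subset hlevc)).exists_eq_range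
    (hΓne.prod ⟨∅, finite_empty, empty_subset _⟩)
  obtain ⟨z, hz⟩ := hlevc.exists_eq_range (hT.2.2.2.1 μ hμ)
  have hmem : ∀ n, e n ∈ Γ μ ×ˢ {t | t.Finite ∧ t ⊆ {x | T.lev x = μ}} :=
    fun n => he ▸ mem_range_self n
  have hzμ : ∀ n, T.lev (z n) = μ := fun n => (hz ▸ mem_range_self n : z n ∈ _)
  obtain ⟨S, hS0, hS⟩ := exists_seq_of_forall_exists_succ (S := fun n => Stage T Γ μ (β n))
    (fun n s s' => SubFun s.cond.f s'.cond.f ∧ SubFun s.commit s'.commit ∧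
      (∃ g ∈ (e n).1, (∀ y ∈ (e n).2, g y = none) ∧ LtOnDom s'.commit g) ∧
      s'.commit (z n) ≠ none) s₀
    (fun n s => s.exists_next hT.1 hμ (hβ n.le_succ) (hβμ _) (fun _ => hext _ (hβμ _))
      (hmem n).1 (hmem n).2.1 (hmem n).2.2 (hzμ n))
  refine ⟨S, hS0, fun n => (hS n).1, fun n => (hS n).2.1, fun H hH t ht htμ => ?_,
    fun x hx => ?_⟩
  · obtain ⟨n, hn⟩ : (H, t) ∈ range e := he ▸ ⟨hH, ht, htμ⟩
    have htask := (hS n).2.2.1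
    rw [hn] at htask
    exact ⟨n + 1, htask⟩
  · obtain ⟨n, rfl⟩ : x ∈ range z := hz ▸ hx
    exact ⟨n + 1, (hS n).2.2.2⟩

end Stage

theorem extensionProperty_of_forall_lt (hT : T.IsOmega1Tree) {μ : Ordinal} (hμ : μ < omega1)
    (hext : ∀ ν < μ, ExtensionProperty T ν) : ExtensionProperty T μ := by
  intro p hp h hhfin hhlev hph
  obtain ⟨β, hβ, hβ0, hβμ, hβcof⟩ := exists_monotone_cofinal hμ hp
  obtain ⟨C₀, hC₀dom, hC₀b, hC₀h⟩ := hph.exists_between hT.1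
  let s₀ : Stage T p.Γ μ (β 0) :=
    ⟨p, C₀, hβ0.symm, rfl, hC₀dom ▸ hhfin, hC₀dom ▸ hhlev, hβ0 ▸ hC₀b⟩
  obtain ⟨S, hS0, hSf, hSC, htask, hnode⟩ := Stage.exists_seq hT hμ hext hβ hβμ s₀
  obtain ⟨r, hrlast, hrbase, hrΓ, hr⟩ :=
    Stage.exists_limit hT.1 hμ hβ hβμ hβcof S hSf hSC htask hnode
  obtain ⟨hpr, hC₀r⟩ := hr 0
  rw [hS0] at hpr hC₀r hrbase
  exact ⟨r, ⟨hrlast ▸ hp.le, hpr, fun _ _ _ => hrΓ ▸ subset_rfl⟩, hrlast, hrbase, hrΓ,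
    hC₀h.mono hC₀r⟩

theorem extensionProperty (hT : T.IsOmega1Tree) {μ : Ordinal} (hμ : μ < omega1) :
    ExtensionProperty T μ := by
  induction μ using WellFoundedLT.induction with
  | _ μ ih => exact extensionProperty_of_forall_lt hT hμ fun ν hν => ih ν hν (hν.trans hμ)

/-- Extension Lemma: any condition of `S(T)` can be extended, keeping the
same promise, to any countable height `μ > last p`; moreover if a finite function
`h : T_μ → ℚ` bounds `f(p)`, then the extension can be chosen below `h`. -/
theorem extension_lemma {α : Type} (T : PreTree α) (hT : T.Aronszajn)
    (p : SCond T) (μ : Ordinal) (hμ₁ : p.last < μ) (hμ₂ : μ < omega1) :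
    (∃ q : SCond T, SExtends q p ∧ q.last = μ ∧ q.base = p.base ∧ q.Γ = p.Γ) ∧
    (∀ h : α → Option ℚ, (pdom h).Finite → pdom h ⊆ {x | T.lev x = μ} →
      Bounds T p.last p.f h →
      ∃ q : SCond T, SExtends q p ∧ q.last = μ ∧ q.base = p.base ∧ q.Γ = p.Γ ∧
        ∀ x qx, h x = some qx → ∃ rx, q.f x = some rx ∧ rx < qx) := by
  have hext := extensionProperty hT.1 hμ₂ p hμ₁
  refine ⟨?_, hext⟩
  obtain ⟨q, hqp, hqlast, hqbase, hqΓ, -⟩ :=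
    hext (fun _ => none) (by simp [pdom]) (by simp [pdom]) (fun _ _ h => nomatch h)
  exact ⟨q, hqp, hqlast, hqbase, hqΓ⟩
end
end

section
/- Assume CH (2^{ℵ₀} = ℵ₁). Then for every Aronszajn tree T, the poset S(T) satisfies the ℵ₂-chain condition: every set of pairwise incompatible conditions of S(T) has cardinality at most ℵ₁. -/
noncomputable section

open Cardinal Set

universe u v w

/-!
Under CH there are only `ℵ₁` approximations: one is determined by its values on the countable
set of nodes of level `≤ last`, so there are at most `2^ℵ₀ = ℵ₁` of them for each of the `ℵ₁`
possible values of `last`. Two conditions with the same approximation whose promises have the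
same arity are compatible, because the union of the two promises is again a promise, fulfilled by
that approximation. So an antichain injects into the set of pairs (approximation, arity).
-/

theorem continuum_eq_aleph_one_of_two_power_aleph0
    (h : (2 : Cardinal.{u}) ^ ℵ₀ = ℵ₁) : continuum.{v} = ℵ₁ := by
  rw [two_power_aleph0] at h
  apply lift_injective.{u}
  have := congrArg lift.{v} h
  simp only [lift_continuum, lift_aleph, Ordinal.lift_one] at this ⊢
  exact this

theorem countable_Iic_of_lt_omega1 {a : Ordinal.{0}} (ha : a < omega1) :
    (Iic a).Countable := by
  have hsucc : Order.succ a < omega1 :=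
    (Cardinal.isSuccLimit_ord (aleph0_le_aleph 1)).succ_lt ha
  rw [← Order.Iio_succ, ← le_aleph0_iff_set_countable, mk_Iio_ordinal, lift_le_aleph0,
    ← lt_aleph_one_iff, ← lt_ord]
  exact hsucc

theorem Cardinal.mk_arrow_le_continuum {σ β : Type*} [Countable σ] [Countable β] :
    #(σ → β) ≤ 𝔠 := by
  rw [← aleph0_power_aleph0, mk_arrow]
  exact (power_le_power_right (lift_le_aleph0.2 mk_le_aleph0)).trans
    (power_le_power_left aleph0_ne_zero (lift_le_aleph0.2 mk_le_aleph0))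

theorem IsApprox.eq_of_eqOn {α : Type u} {T : PreTree α} {a : Ordinal} {f g : α → Option ℚ}
    (hf : IsApprox T a f) (hg : IsApprox T a g) (h : EqOn f g {x | T.lev x ≤ a}) : f = g := by
  funext x
  by_cases hx : T.lev x ≤ a
  · exact h hx
  · rw [not_ne_iff.1 (mt (hf.2.1 x).1 hx), not_ne_iff.1 (mt (hg.2.1 x).1 hx)]

namespace PreTree.IsOmega1Tree

variable {α : Type u} {T : PreTree α}

theorem countable_setOf_lev_le (hT : T.IsOmega1Tree) {a : Ordinal} (ha : a < omega1) :
    {x | T.lev x ≤ a}.Countable := by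
  have : {x | T.lev x ≤ a} = ⋃ o ∈ Iic a, {x | T.lev x = o} := by ext; simp
  rw [this]
  exact (countable_Iic_of_lt_omega1 ha).biUnion fun o ho => hT.2.2.1 o (ho.trans_lt ha)

theorem eq_of_isApprox (hT : T.IsOmega1Tree) {a b : Ordinal} {f : α → Option ℚ}
    (ha : IsApprox T a f) (hb : IsApprox T b f) : a = b := by
  have le_of_isApprox : ∀ {a b}, IsApprox T a f → IsApprox T b f → b ≤ a := by
    intro a b ha hb
    obtain ⟨x, rfl⟩ := hT.2.2.2.1 b hb.1
    exact (ha.2.1 x).1 ((hb.2.1 x).2 le_rfl)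
  exact le_antisymm (le_of_isApprox hb ha) (le_of_isApprox ha hb)

theorem mk_setOf_isApprox_le (hT : T.IsOmega1Tree) (hCH : continuum.{u} = ℵ₁) {a : Ordinal}
    (ha : a < omega1) : #{f : α → Option ℚ | IsApprox T a f} ≤ ℵ₁ := by
  have : Countable {x | T.lev x ≤ a} := (hT.countable_setOf_lev_le ha).to_subtype
  let restrict (f : {f : α → Option ℚ | IsApprox T a f}) : {x | T.lev x ≤ a} → Option ℚ :=
    fun x => f.1 x
  have hrestrict : Function.Injective restrict := fun f g hfg =>
    Subtype.ext (f.2.eq_of_eqOn g.2 fun x hx => congrFun hfg ⟨x, hx⟩)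
  exact hCH ▸ (mk_le_of_injective hrestrict).trans mk_arrow_le_continuum

theorem mk_setOf_exists_isApprox_le (hT : T.IsOmega1Tree) (hCH : continuum.{u} = ℵ₁) :
    #{f : α → Option ℚ | ∃ a, IsApprox T a f} ≤ ℵ₁ := by
  have : {f : α → Option ℚ | ∃ a, IsApprox T a f} =
      ⋃ a ∈ Iio omega1, {f | IsApprox T a f} := by
    ext f
    simpa using ⟨fun ⟨a, ha⟩ => ⟨a, ha.1, ha⟩, fun ⟨a, _, ha⟩ => ⟨a, ha⟩⟩
  rw [this, ← lift_le_aleph_one.{u, 1}]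
  refine (mk_biUnion_le_lift _ _).trans ?_
  have hω₁ : lift.{u} #(Iio omega1) = ℵ₁ := by
    rw [mk_Iio_ordinal, omega1, card_ord]; simp
  have hsup : ⨆ a : Iio omega1, lift.{1} #{f : α → Option ℚ | IsApprox T a f} ≤ ℵ₁ :=
    ciSup_le' fun a => lift_le_aleph_one.2 (hT.mk_setOf_isApprox_le hCH a.2)
  rw [hω₁]
  exact (mul_le_mul_right hsup _).trans (mul_eq_self (aleph0_le_aleph 1)).le

end PreTree.IsOmega1Tree

section Promise

variable {α : Type u} {T : PreTree α}

def HasArity (T : PreTree α) (b : Ordinal) (Γ : Ordinal → Set (Set (α → Option ℚ)))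
    (n : ℕ) : Prop :=
  ∀ γ, b ≤ γ → γ < omega1 → ∀ H ∈ Γ γ, IsRequirement T γ n H

theorem HasArity.mono {b c : Ordinal} {Γ : Ordinal → Set (Set (α → Option ℚ))} {n : ℕ}
    (h : HasArity T b Γ n) (hbc : b ≤ c) : HasArity T c Γ n :=
  fun γ hγ => h γ (hbc.trans hγ)

theorem IsPromise.mono {b c : Ordinal} {Γ : Ordinal → Set (Set (α → Option ℚ))}
    (h : IsPromise T b Γ) (hbc : b ≤ c) (hc : c < omega1) : IsPromise T c Γ :=
  ⟨hc, h.2.1.imp fun _ hn γ hγ => hn γ (hbc.trans hγ), fun γ hγ => h.2.2.1 γ (hbc.trans hγ),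
    fun γ₀ γ₁ hγ₀ => h.2.2.2 γ₀ γ₁ (hbc.trans hγ₀)⟩

theorem IsPromise.union {b : Ordinal} {Γ Δ : Ordinal → Set (Set (α → Option ℚ))} {n : ℕ}
    (hΓ : IsPromise T b Γ) (hΔ : IsPromise T b Δ) (hΓn : HasArity T b Γ n)
    (hΔn : HasArity T b Δ n) : IsPromise T b (Γ ⊔ Δ) := by
  refine ⟨hΓ.1, ⟨n, fun γ hγ hγ' H hH => hH.elim (hΓn γ hγ hγ' H) (hΔn γ hγ hγ' H)⟩,
    fun γ hγ hγ' => ?_, fun γ₀ γ₁ hγ₀ h01 hγ₁ => ?_⟩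
  · obtain ⟨hΓc, hΓne, hΓd⟩ := hΓ.2.2.1 γ hγ hγ'
    obtain ⟨hΔc, -, hΔd⟩ := hΔ.2.2.1 γ hγ hγ'
    exact ⟨hΓc.union hΔc, hΓne.mono subset_union_left, fun H hH => hH.elim (hΓd H) (hΔd H)⟩
  · simp only [Pi.sup_apply, sup_eq_union, hΓ.2.2.2 γ₀ γ₁ hγ₀ h01 hγ₁,
      hΔ.2.2.2 γ₀ γ₁ hγ₀ h01 hγ₁]
    ext H'
    simp only [mem_union, mem_ofPred_eq, ← exists_or, ← or_and_right]

end Promise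

namespace SCond

variable {α : Type u} {T : PreTree α}

def arity (p : SCond T) : ℕ := p.promise.2.1.choose

theorem hasArity (p : SCond T) : HasArity T p.base p.Γ p.arity :=
  p.promise.2.1.choose_spec

theorem compatible_of_f_eq {p q : SCond T} (hlast : p.last = q.last) (hf : p.f = q.f)
    (harity : p.arity = q.arity) : ∃ r : SCond T, SExtends r p ∧ SExtends r q := by
  have hpromise : IsPromise T p.last (p.Γ ⊔ q.Γ) :=
    (p.promise.mono p.base_le p.approx.1).union (hlast ▸ q.promise.mono q.base_le q.approx.1)
      (p.hasArity.mono p.base_le) (harity ▸ hlast ▸ q.hasArity.mono q.base_le)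
  refine ⟨⟨p.last, p.f, p.last, p.Γ ⊔ q.Γ, p.approx, hpromise, le_rfl, ?_⟩,
    ⟨le_rfl, fun _ _ => rfl, fun _ _ _ => le_sup_left⟩,
    ⟨hlast.ge, fun x _ => congrFun hf x, fun _ _ _ => le_sup_right⟩⟩
  rintro H (hH | hH)
  · exact p.fulfills H hH
  · simpa only [hf, hlast] using q.fulfills H (hlast ▸ hH)

end SCond

/-- assuming CH, for every Aronszajn tree `T` the poset `S(T)` satisfies
the ℵ₂-chain condition: every pairwise-incompatible set of conditions has size ≤ ℵ₁. -/
theorem sCond_aleph_two_cc {α : Type} (T : PreTree α) (hT : T.Aronszajn)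
    (hCH : (2 : Cardinal) ^ Cardinal.aleph0 = Cardinal.aleph 1)
    (A : Set (SCond T))
    (hA : ∀ p ∈ A, ∀ q ∈ A, p ≠ q → ¬ ∃ r : SCond T, SExtends r p ∧ SExtends r q) :
    Cardinal.mk A ≤ Cardinal.aleph 1 := by
  let key (p : A) : {f : α → Option ℚ | ∃ a, IsApprox T a f} × ℕ :=
    (⟨p.1.f, p.1.last, p.1.approx⟩, p.1.arity)
  have hkey : Function.Injective key := by
    rintro ⟨p, hp⟩ ⟨q, hq⟩ hpq
    obtain ⟨hf, harity⟩ : p.f = q.f ∧ p.arity = q.arity := by simpa [key] using hpq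
    have hlast : p.last = q.last := hT.1.eq_of_isApprox p.approx (hf ▸ q.approx)
    by_contra hne
    exact hA p hp q hq (by simpa using hne) (SCond.compatible_of_f_eq hlast hf harity)
  have hcount : #({f : α → Option ℚ | ∃ a, IsApprox T a f} × ℕ) ≤ ℵ₁ := by
    rw [mk_prod, lift_id, lift_id, mk_nat]
    exact (mul_le_mul' (hT.1.mk_setOf_exists_isApprox_le
      (continuum_eq_aleph_one_of_two_power_aleph0 hCH)) (aleph0_le_aleph 1)).trans
      (mul_eq_self (aleph0_le_aleph 1)).le
  simpa using (lift_mk_le_lift_mk_of_injective hkey).trans (lift_le_aleph_one.2 hcount)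
end
end
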